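/- arXiv:1008.3364 — 5 statements merged into one kernel-verified Lean document; each statement's English description precedes it below -/
import Mathlib

section
/- Let n ≥ 1 and s_0, …, s_{n−1} ∈ ℂ, and let U^s_n be the n×n lower triangular Toeplitz matrix with (i,j) entry s_{i−j} for i ≥ j and 0 otherwise. There exists a function f in the Schur class 𝒮 whose Taylor coefficients at the origin satisfy f^{(j)}(0)/j! = s_j for j = 0, …, n−1 if and only if the matrix I_n − U^s_n (U^s_n)^* is positive semidefinite (equivalently, if and only if U^s_n is a contraction). -/
open Complex Filter Matrix Metric Set Asymptotics
open scoped ComplexConjugate ComplexOrder Topology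

noncomputable section

/-- The open unit disk in `ℂ`. -/
def unitDisk : Set ℂ := Metric.ball (0 : ℂ) 1

/-- The Schur class: functions analytic on the open unit disk, bounded by one in modulus there. -/
def SchurClass : Set (ℂ → ℂ) :=
  {f | DifferentiableOn ℂ f unitDisk ∧ ∀ z ∈ unitDisk, ‖f z‖ ≤ 1}

/-- Stolz angle at a boundary point `t0` with aperture `κ`. -/
def stolzAngle (t0 : ℂ) (κ : ℝ) : Set ℂ :=
  {z ∈ unitDisk | ‖z - t0‖ < κ * (1 - ‖z‖)}

/-- `g z → L` as `z → t0` nontangentially. -/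
def NTTendsto (g : ℂ → ℂ) (t0 L : ℂ) : Prop :=
  ∀ κ : ℝ, 1 < κ → Filter.Tendsto g (nhdsWithin t0 (stolzAngle t0 κ)) (nhds L)

/-- The boundary derivative `f_j(t0)` exists and equals `s`. -/
def HasBDeriv (f : ℂ → ℂ) (t0 : ℂ) (j : ℕ) (s : ℂ) : Prop :=
  NTTendsto (fun z => iteratedDeriv j f z / (Nat.factorial j : ℂ)) t0 s

/-- `f` is a solution of the boundary interpolation problem `BP_N` with data `t0`, `s`. -/
def SolvesBP (t0 : ℂ) (s : ℕ → ℂ) (N : ℕ) (f : ℂ → ℂ) : Prop :=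
  f ∈ SchurClass ∧ ∀ j ≤ N, HasBDeriv f t0 j (s j)

/-- `g = o(h)` as `z → t0` nontangentially. -/
def NTLittleO (g h : ℂ → ℂ) (t0 : ℂ) : Prop :=
  ∀ κ : ℝ, 1 < κ → g =o[nhdsWithin t0 (stolzAngle t0 κ)] h

/-- restrictions to the unit disk of the solutions of `BP_N` -/
def solSet (t0 : ℂ) (s : ℕ → ℂ) (N : ℕ) : Set (unitDisk → ℂ) :=
  {g | ∃ f, SolvesBP t0 s N f ∧ g = unitDisk.restrict f}

/-- The (1-indexed) `(j, l)` entry of the structured matrix `Ψ_n(t0)`. -/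
def PsiEntry (t0 : ℂ) (j l : ℕ) : ℂ :=
  if j ≤ l then (-1 : ℂ) ^ (l - 1) * ((l - 1).choose (j - 1) : ℂ) * t0 ^ (l + j - 1) else 0

/-- The (1-indexed) entry `p^s_{ij}` of the structured matrix `ℙ^s_n = H^s_n Ψ_n(t0) (U^s_n)^*`. -/
def pEntry (t0 : ℂ) (s : ℕ → ℂ) (i j : ℕ) : ℂ :=
  ∑ r ∈ Finset.Icc 1 j,
    (∑ l ∈ Finset.Icc 1 r, s (i + l - 1) * PsiEntry t0 l r) * conj (s (j - r))

/-- The structured matrix `ℙ^s_n = H^s_n Ψ_n(t0) (U^s_n)^*`. -/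
def Pmat (t0 : ℂ) (s : ℕ → ℂ) (n : ℕ) : Matrix (Fin n) (Fin n) ℂ :=
  Matrix.of fun i j => pEntry t0 s ((i : ℕ) + 1) ((j : ℕ) + 1)

/-- The augmented `n × (n+1)` matrix `[ℙ^s_n  B_n]`. -/
def PmatAug (t0 : ℂ) (s : ℕ → ℂ) (n : ℕ) : Matrix (Fin n) (Fin (n + 1)) ℂ :=
  Matrix.of fun i j => pEntry t0 s ((i : ℕ) + 1) ((j : ℕ) + 1)

/-- The lower triangular Toeplitz matrix `U^s_n`. -/
def Umat (s : ℕ → ℂ) (n : ℕ) : Matrix (Fin n) (Fin n) ℂ :=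
  Matrix.of fun i j => if (j : ℕ) ≤ (i : ℕ) then s ((i : ℕ) - (j : ℕ)) else 0

/-- `f` coincides on the unit disk with a finite Blaschke product of degree `d`. -/
def IsBlaschke (f : ℂ → ℂ) (d : ℕ) : Prop :=
  ∃ (c : ℂ) (a : Fin d → ℂ), ‖c‖ = 1 ∧ (∀ k, a k ∈ unitDisk) ∧
    ∀ z ∈ unitDisk, f z = c * ∏ k, (z - a k) / (1 - conj (a k) * z)

/-- Wirtinger derivative `∂/∂z`. -/
def wdz (u : ℂ → ℂ) : ℂ → ℂ :=
  fun z => (fderiv ℝ u z 1 - Complex.I * fderiv ℝ u z Complex.I) / 2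

/-- Wirtinger derivative `∂/∂z̄`. -/
def wdzbar (u : ℂ → ℂ) : ℂ → ℂ :=
  fun z => (fderiv ℝ u z 1 + Complex.I * fderiv ℝ u z Complex.I) / 2

/-- The kernel `(1 - |f(z)|²)/(1 - |z|²)`, regarded as a complex-valued function. -/
def spKernel (f : ℂ → ℂ) : ℂ → ℂ :=
  fun z => (((1 - ‖f z‖ ^ 2) / (1 - ‖z‖ ^ 2) : ℝ) : ℂ)

/-- `∂^{i+j}/∂z^i ∂z̄^j [(1 - |f(z)|²)/(1 - |z|²)]`. -/
def spDeriv (f : ℂ → ℂ) (i j : ℕ) : ℂ → ℂ := wdz^[i] (wdzbar^[j] (spKernel f))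

/-- The Schwarz–Pick matrix `P^f_n(z)`. -/
def SchwarzPick (f : ℂ → ℂ) (n : ℕ) (z : ℂ) : Matrix (Fin n) (Fin n) ℂ :=
  Matrix.of fun i j =>
    (1 / ((Nat.factorial (i : ℕ) : ℂ) * (Nat.factorial (j : ℕ) : ℂ))) * spDeriv f i j z

/-- The class `𝒮^{(n)}(t0)` of Schur functions satisfying a higher order
Carathéodory–Julia condition at `t0`. -/
def SchurN (n : ℕ) (t0 : ℂ) : Set (ℂ → ℂ) :=
  {f | f ∈ SchurClass ∧
    Filter.liminf (fun z => ((spDeriv f (n - 1) (n - 1) z).re : EReal))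
      (nhdsWithin t0 unitDisk) < ⊤}

/-- The Jordan-type matrix `T` with diagonal `t0` and subdiagonal `1`. -/
def Tmat (t0 : ℂ) (n : ℕ) : Matrix (Fin n) (Fin n) ℂ :=
  Matrix.of fun i j =>
    if (i : ℕ) = (j : ℕ) then t0 else if (i : ℕ) = (j : ℕ) + 1 then 1 else 0

/-- The column `E = (1,0,…,0)ᵀ`. -/
def Evec (n : ℕ) : Matrix (Fin n) (Fin 1) ℂ :=
  Matrix.of fun i _ => if (i : ℕ) = 0 then 1 else 0

/-- The column `M = (s_0,…,s_{n−1})ᵀ`. -/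
def Mvec (s : ℕ → ℂ) (n : ℕ) : Matrix (Fin n) (Fin 1) ℂ :=
  Matrix.of fun i _ => s (i : ℕ)

/-- The matrix `P̃ = ℙ^s_n + M M^*`. -/
def Ptilde (t0 : ℂ) (s : ℕ → ℂ) (n : ℕ) : Matrix (Fin n) (Fin n) ℂ :=
  Pmat t0 s n + Mvec s n * (Mvec s n)ᴴ

/-- The resolvent-type matrix `(P̃ − z ℙ^s_n T^*)⁻¹`. -/
def resolv (t0 : ℂ) (s : ℕ → ℂ) (n : ℕ) (z : ℂ) : Matrix (Fin n) (Fin n) ℂ :=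
  (Ptilde t0 s n - z • (Pmat t0 s n * (Tmat t0 n)ᴴ))⁻¹

/-- `α = sqrt(1 − M^* P̃⁻¹ M)`. -/
def alphaC (t0 : ℂ) (s : ℕ → ℂ) (n : ℕ) : ℂ :=
  (Real.sqrt (1 - (((Mvec s n)ᴴ * (Ptilde t0 s n)⁻¹ * Mvec s n) 0 0).re) : ℝ)

/-- `β = sqrt(1 − E^* P̃⁻¹ E)`. -/
def betaC (t0 : ℂ) (s : ℕ → ℂ) (n : ℕ) : ℂ :=
  (Real.sqrt (1 - (((Evec n)ᴴ * (Ptilde t0 s n)⁻¹ * Evec n) 0 0).re) : ℝ)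

/-- The rational function `a`. -/
def afun (t0 : ℂ) (s : ℕ → ℂ) (n : ℕ) (z : ℂ) : ℂ :=
  ((Evec n)ᴴ * resolv t0 s n z * Mvec s n) 0 0

/-- The rational function `b`. -/
def bfun (t0 : ℂ) (s : ℕ → ℂ) (n : ℕ) (z : ℂ) : ℂ :=
  betaC t0 s n * (1 - z * ((Evec n)ᴴ * resolv t0 s n z * (Tmat t0 n)⁻¹ * Evec n) 0 0)

/-- The rational function `c`. -/
def cfun (t0 : ℂ) (s : ℕ → ℂ) (n : ℕ) (z : ℂ) : ℂ :=
  alphaC t0 s n * (1 - z * ((Mvec s n)ᴴ * (Tmat t0 n)ᴴ * resolv t0 s n z * Mvec s n) 0 0)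

/-- The rational function `d`. -/
def dfun (t0 : ℂ) (s : ℕ → ℂ) (n : ℕ) (z : ℂ) : ℂ :=
  z * alphaC t0 s n * betaC t0 s n *
    ((Mvec s n)ᴴ * (Pmat t0 s n)⁻¹ * Ptilde t0 s n * resolv t0 s n z * (Tmat t0 n)⁻¹ *
      Evec n) 0 0

/-- Taylor coefficient of `g` at `t0`: `g_j(t0) = g^{(j)}(t0)/j!`. -/
def tcoef (g : ℂ → ℂ) (t0 : ℂ) (j : ℕ) : ℂ :=
  iteratedDeriv j g t0 / (Nat.factorial j : ℂ)

/-! The Schur algorithm. For `f` in the Schur class with `c = f 0` and `|c| < 1`, the Schur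
reduction `g = (f - c) / (z (1 - c̄ f))` is again a Schur function (Schwarz lemma), and every Schur
function `g` arises this way, from `f = (c + z g) / (1 + c̄ z g)`. On Taylor coefficients,
`f (1 + c̄ z g) = c + z g` becomes an identity `E U = c + W` of lower triangular Toeplitz matrices,
with `E = 1 + c̄ W` invertible and `W` the Toeplitz matrix of `z g`. It gives the congruence
`E (1 - U Uᴴ) Eᴴ = (1 - |c|²) (1 - W Wᴴ)`, and `1 - W Wᴴ` is `1 - V Vᴴ` bordered by a one, where `V`
is the Toeplitz matrix of `g`, one size smaller. Induction on `n` thus reduces both sides of the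
criterion from `f` to `g`. When `|c| = 1` both sides force the data to be the constant `c`: by the
maximum modulus principle on one side, and on the other because a positive semidefinite matrix with
a zero diagonal entry has a zero row.
-/

open PowerSeries

section PosSemidef

variable {ι : Type*}

lemma Matrix.posSemidef_real_smul_iff {M : Matrix ι ι ℂ} {r : ℝ} (hr : 0 < r) :
    (r • M).PosSemidef ↔ M.PosSemidef := by
  refine ⟨fun h => ?_, fun h => h.smul hr.le⟩
  simpa [smul_smul, inv_mul_cancel₀ hr.ne'] using h.smul (inv_nonneg.mpr hr.le)

lemma Matrix.PosSemidef.apply_eq_zero_of_apply_self_eq_zero {M : Matrix ι ι ℂ}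
    (hM : M.PosSemidef) {j : ι} (hj : M j j = 0) (i : ι) : M i j = 0 := by
  have hdet := (hM.submatrix ![i, j]).det_nonneg
  have hji : M j i = conj (M i j) := by simpa using (congrFun (congrFun hM.1 j) i).symm
  rw [det_fin_two] at hdet
  simp only [submatrix_apply, Matrix.cons_val_zero, Matrix.cons_val_one, hj, hji, mul_zero,
    zero_sub, Complex.mul_conj] at hdet
  have : Complex.normSq (M i j) ≤ 0 := by exact_mod_cast neg_nonneg.mp hdet
  exact Complex.normSq_eq_zero.mp (le_antisymm this (Complex.normSq_nonneg _))

variable [Fintype ι] [DecidableEq ι]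

lemma Matrix.posSemidef_one_sub_mul_conjTranspose_iff (A : Matrix ι ι ℂ) :
    (1 - A * Aᴴ).PosSemidef ↔ ∀ x, star (Aᴴ *ᵥ x) ⬝ᵥ (Aᴴ *ᵥ x) ≤ star x ⬝ᵥ x := by
  have hquad (x : ι → ℂ) : star x ⬝ᵥ ((1 - A * Aᴴ) *ᵥ x) =
      star x ⬝ᵥ x - star (Aᴴ *ᵥ x) ⬝ᵥ (Aᴴ *ᵥ x) := by
    rw [sub_mulVec, one_mulVec, dotProduct_sub, ← mulVec_mulVec, star_mulVec,
      conjTranspose_conjTranspose, dotProduct_mulVec]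
  refine ⟨fun h x => sub_nonneg.mp (hquad x ▸ h.dotProduct_mulVec_nonneg x), fun h => ?_⟩
  refine .of_dotProduct_mulVec_nonneg (isHermitian_one.sub (isHermitian_mul_conjTranspose_self A))
    fun x => ?_
  rw [hquad]
  exact sub_nonneg.mpr (h x)

lemma Matrix.conj_one_sub_mul_conjTranspose {U E W : Matrix ι ι ℂ} {c : ℂ}
    (hE : E = 1 + conj c • W) (hEU : E * U = c • 1 + W) :
    E * (1 - U * Uᴴ) * Eᴴ = (1 - ‖c‖ ^ 2) • (1 - W * Wᴴ) := by
  have : E * (1 - U * Uᴴ) * Eᴴ = E * Eᴴ - (E * U) * (E * U)ᴴ := by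
    simp only [Matrix.mul_sub, Matrix.sub_mul, Matrix.mul_one, conjTranspose_mul, Matrix.mul_assoc]
  rw [this, hEU, hE]
  simp only [conjTranspose_add, conjTranspose_smul, conjTranspose_one, Matrix.add_mul,
    Matrix.mul_add, Matrix.smul_mul, Matrix.mul_smul, Matrix.one_mul, Matrix.mul_one,
    Complex.star_def, Complex.conj_conj]
  have hc : ((1 - ‖c‖ ^ 2 : ℝ) : ℂ) = 1 - c * conj c := by
    rw [Complex.mul_conj, Complex.normSq_eq_norm_sq]; push_cast; ring
  rw [← Complex.coe_smul, hc]
  module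

end PosSemidef

section LowerToeplitz

variable {n : ℕ}

lemma Umat_coeff_mul (φ ψ : PowerSeries ℂ) :
    Umat (coeff · (φ * ψ)) n = Umat (coeff · φ) n * Umat (coeff · ψ) n := by
  ext i j
  simp only [Umat, Matrix.mul_apply, Matrix.of_apply, coeff_mul]
  split_ifs with hji
  -- the nonzero terms of the product, `j ≤ k ≤ i`, match the antidiagonal via `k ↦ (i - k, k - j)`
  · refine Finset.sum_bij_ne_zero
      (fun p _ _ => ⟨j + p.2, by grind [Finset.HasAntidiagonal.mem_antidiagonal]⟩)
      (fun _ _ _ => Finset.mem_univ _) ?_ ?_ ?_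
    · intro p hp _ q hq _ h
      simp only [Finset.HasAntidiagonal.mem_antidiagonal, Fin.mk.injEq] at hp hq h
      ext <;> omega
    · intro k _ hk
      have hjk : (j : ℕ) ≤ k ∧ (k : ℕ) ≤ i := by
        by_contra h
        apply hk
        split_ifs <;> first | omega | simp
      refine ⟨((i : ℕ) - k, (k : ℕ) - j), by simp; omega, ?_, by ext; simp; omega⟩
      rwa [if_pos hjk.2, if_pos hjk.1] at hk
    · intro p hp _
      simp only [Finset.HasAntidiagonal.mem_antidiagonal] at hp
      rw [if_pos (by simp; omega), if_pos (by simp)]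
      congr 3 <;> dsimp only <;> omega
  · refine (Finset.sum_eq_zero fun k _ => ?_).symm
    split_ifs <;> first | omega | simp

lemma Umat_coeff_C (a : ℂ) : Umat (coeff · (C a)) n = a • 1 := by
  ext i j
  simp only [Umat, coeff_C, Matrix.of_apply, Matrix.smul_apply, Matrix.one_apply, smul_eq_mul,
    Fin.ext_iff]
  split_ifs <;> first | omega | simp

def lowerToeplitz (n : ℕ) : PowerSeries ℂ →+* Matrix (Fin n) (Fin n) ℂ where
  toFun φ := Umat (coeff · φ) n
  map_one' := by simpa using Umat_coeff_C (n := n) 1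
  map_mul' := Umat_coeff_mul
  map_zero' := by ext; simp [Umat]
  map_add' φ ψ := by
    ext
    simp only [Umat, map_add, Matrix.of_apply, Matrix.add_apply]
    split_ifs <;> simp

lemma lowerToeplitz_apply (φ : PowerSeries ℂ) (i j : Fin n) :
    lowerToeplitz n φ i j = if (j : ℕ) ≤ i then coeff (i - j : ℕ) φ else 0 := rfl

lemma lowerToeplitz_mk (s : ℕ → ℂ) : lowerToeplitz n (mk s) = Umat s n := by
  ext i j
  simp [lowerToeplitz_apply, Umat]

lemma lowerToeplitz_C (a : ℂ) : lowerToeplitz n (C a) = a • 1 := Umat_coeff_C a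

lemma lowerToeplitz_eq_zero_of_X_pow_dvd {φ : PowerSeries ℂ} (h : X ^ n ∣ φ) :
    lowerToeplitz n φ = 0 := by
  ext i j
  rw [lowerToeplitz_apply, X_pow_dvd_iff.mp h _ (by omega)]
  simp

lemma lowerToeplitz_eq_of_X_pow_dvd_sub {φ ψ : PowerSeries ℂ} (h : X ^ n ∣ φ - ψ) :
    lowerToeplitz n φ = lowerToeplitz n ψ :=
  sub_eq_zero.mp (map_sub (lowerToeplitz n) φ ψ ▸ lowerToeplitz_eq_zero_of_X_pow_dvd h)

lemma lowerToeplitz_mul_conjTranspose_apply_zero (φ : PowerSeries ℂ) (i : Fin (n + 1)) :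
    (lowerToeplitz (n + 1) φ * (lowerToeplitz (n + 1) φ)ᴴ) i 0 =
      coeff i φ * conj (constantCoeff φ) := by
  rw [Matrix.mul_apply, Finset.sum_eq_single 0]
  · simp [lowerToeplitz_apply]
  · intro k _ hk
    have hk0 : ¬ (k : ℕ) ≤ (0 : Fin (n + 1)) := (Fin.pos_iff_ne_zero.mpr hk).not_ge
    rw [Matrix.conjTranspose_apply, lowerToeplitz_apply φ 0 k, if_neg hk0]
    simp
  · simp

section shift

variable (G : PowerSeries ℂ)

lemma lowerToeplitz_X_mul_succ_castSucc (i j : Fin n) :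
    lowerToeplitz (n + 1) (X * G) i.succ j.castSucc = lowerToeplitz n G i j := by
  simp only [lowerToeplitz_apply, Fin.val_succ, Fin.val_castSucc]
  split_ifs <;> first | omega | rfl | skip
  · rw [show (i : ℕ) + 1 - j = (i - j : ℕ) + 1 by omega, coeff_succ_X_mul]
  · rw [show (i : ℕ) + 1 - j = 0 by omega, coeff_zero_X_mul]

lemma lowerToeplitz_X_mul_zero (j : Fin (n + 1)) : lowerToeplitz (n + 1) (X * G) 0 j = 0 := by
  rw [lowerToeplitz_apply]
  split_ifs <;> simp_all

lemma lowerToeplitz_X_mul_last (i : Fin (n + 1)) :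
    lowerToeplitz (n + 1) (X * G) i (Fin.last n) = 0 := by
  rw [lowerToeplitz_apply]
  split_ifs
  · rw [show (i - Fin.last n : ℕ) = 0 by simp; omega, coeff_zero_X_mul]
  · rfl

end shift

lemma posSemidef_one_sub_lowerToeplitz_X_mul_iff (G : PowerSeries ℂ) :
    (1 - lowerToeplitz (n + 1) (X * G) * (lowerToeplitz (n + 1) (X * G))ᴴ).PosSemidef ↔
      (1 - lowerToeplitz n G * (lowerToeplitz n G)ᴴ).PosSemidef := by
  set A := lowerToeplitz (n + 1) (X * G)
  set B := lowerToeplitz n G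
  have hcastSucc (x : Fin (n + 1) → ℂ) (j : Fin n) :
      (Aᴴ *ᵥ x) j.castSucc = (Bᴴ *ᵥ (x ∘ Fin.succ)) j := by
    simp only [mulVec, dotProduct, conjTranspose_apply, Fin.sum_univ_succ,
      lowerToeplitz_X_mul_zero, lowerToeplitz_X_mul_succ_castSucc, A, B]
    simp
  have hlast (x : Fin (n + 1) → ℂ) : (Aᴴ *ᵥ x) (Fin.last n) = 0 := by
    simp only [mulVec, dotProduct, conjTranspose_apply, lowerToeplitz_X_mul_last, A]
    simp
  have hnormA (x : Fin (n + 1) → ℂ) : star (Aᴴ *ᵥ x) ⬝ᵥ (Aᴴ *ᵥ x) =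
      star (Bᴴ *ᵥ (x ∘ Fin.succ)) ⬝ᵥ (Bᴴ *ᵥ (x ∘ Fin.succ)) := by
    simp [dotProduct, Fin.sum_univ_castSucc, hlast, hcastSucc]
  have hnorm (x : Fin (n + 1) → ℂ) :
      star x ⬝ᵥ x = star (x 0) * x 0 + star (x ∘ Fin.succ) ⬝ᵥ (x ∘ Fin.succ) := by
    simp [dotProduct, Fin.sum_univ_succ]
  rw [posSemidef_one_sub_mul_conjTranspose_iff, posSemidef_one_sub_mul_conjTranspose_iff]
  constructor
  · intro h x
    simpa [hnormA, hnorm] using h (Fin.cons 0 x)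
  · intro h x
    rw [hnormA, hnorm]
    exact (h _).trans (le_add_of_nonneg_left (star_mul_self_nonneg _))

lemma one_sub_lowerToeplitz_mul_conjTranspose_apply_zero (φ : PowerSeries ℂ)
    (i : Fin (n + 1)) :
    (1 - lowerToeplitz (n + 1) φ * (lowerToeplitz (n + 1) φ)ᴴ) i 0 =
      (if i = 0 then 1 else 0) - coeff i φ * conj (constantCoeff φ) := by
  rw [Matrix.sub_apply, Matrix.one_apply, lowerToeplitz_mul_conjTranspose_apply_zero]

lemma norm_constantCoeff_le_one_of_posSemidef {φ : PowerSeries ℂ}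
    (h : (1 - lowerToeplitz (n + 1) φ * (lowerToeplitz (n + 1) φ)ᴴ).PosSemidef) :
    ‖constantCoeff φ‖ ≤ 1 := by
  have h00 := h.diag_nonneg (i := 0)
  rw [one_sub_lowerToeplitz_mul_conjTranspose_apply_zero, if_pos rfl, Fin.val_zero,
    coeff_zero_eq_constantCoeff_apply, Complex.mul_conj, Complex.normSq_eq_norm_sq] at h00
  have : ‖constantCoeff φ‖ ^ 2 ≤ 1 := by exact_mod_cast sub_nonneg.mp h00
  nlinarith [norm_nonneg (constantCoeff φ)]

lemma posSemidef_iff_X_pow_dvd_of_norm_eq_one {φ : PowerSeries ℂ}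
    (hc : ‖constantCoeff φ‖ = 1) :
    (1 - lowerToeplitz (n + 1) φ * (lowerToeplitz (n + 1) φ)ᴴ).PosSemidef ↔
      X ^ (n + 1) ∣ φ - C (constantCoeff φ) := by
  have hcc : constantCoeff φ * conj (constantCoeff φ) = 1 := by
    rw [Complex.mul_conj, Complex.normSq_eq_norm_sq, hc]; norm_num
  have hcc' : conj (constantCoeff φ) * constantCoeff φ = 1 := by rw [mul_comm, hcc]
  constructor
  · intro h
    have h00 : (1 - lowerToeplitz (n + 1) φ * (lowerToeplitz (n + 1) φ)ᴴ) 0 0 = 0 := by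
      rw [one_sub_lowerToeplitz_mul_conjTranspose_apply_zero, if_pos rfl, Fin.val_zero,
        coeff_zero_eq_constantCoeff_apply, hcc, sub_self]
    refine X_pow_dvd_iff.mpr fun m hm => ?_
    rcases m with _ | m
    · simp
    · have := h.apply_eq_zero_of_apply_self_eq_zero h00 ⟨m + 1, hm⟩
      rw [one_sub_lowerToeplitz_mul_conjTranspose_apply_zero, if_neg (by simp [Fin.ext_iff]),
        zero_sub, neg_eq_zero] at this
      have hc0 : conj (constantCoeff φ) ≠ 0 := by
        rw [map_ne_zero, ← norm_ne_zero_iff, hc]; exact one_ne_zero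
      simpa [coeff_C] using (mul_eq_zero.mp this).resolve_right hc0
  · intro h
    rw [lowerToeplitz_eq_of_X_pow_dvd_sub h, lowerToeplitz_C]
    simpa [smul_smul, hcc'] using PosSemidef.zero

end LowerToeplitz

section SchurIdentity

variable {c : ℂ} {F G F' G' : PowerSeries ℂ}

lemma one_sub_conj_mul_self_ne_zero (hc : ‖c‖ < 1) : 1 - conj c * c ≠ 0 := by
  rw [sub_ne_zero, mul_comm, Complex.mul_conj, Complex.normSq_eq_norm_sq]
  exact_mod_cast (pow_lt_one₀ (norm_nonneg c) hc two_ne_zero).ne'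

lemma constantCoeff_eq_of_schur_identity (h : F * (1 + C (conj c) * (X * G)) = C c + X * G) :
    constantCoeff F = c := by
  simpa using congrArg constantCoeff h

lemma exists_schur_identity {φ : PowerSeries ℂ} (hc : ‖constantCoeff φ‖ < 1) :
    ∃ G, φ * (1 + C (conj (constantCoeff φ)) * (X * G)) = C (constantCoeff φ) + X * G := by
  set c := constantCoeff φ
  have hden : constantCoeff (1 - C (conj c) * φ) ≠ 0 := by
    simpa using one_sub_conj_mul_self_ne_zero hc
  obtain ⟨G, hG⟩ : X ∣ (φ - C c) * (1 - C (conj c) * φ)⁻¹ := by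
    rw [X_dvd_iff]; simp [c]
  refine ⟨G, ?_⟩
  have hinv := PowerSeries.mul_inv_cancel _ hden
  rw [← hG]
  linear_combination (C c - φ) * hinv

lemma posSemidef_schur_step_iff (n : ℕ) (hc : ‖c‖ < 1)
    (h : F * (1 + C (conj c) * (X * G)) = C c + X * G) :
    (1 - lowerToeplitz (n + 1) F * (lowerToeplitz (n + 1) F)ᴴ).PosSemidef ↔
      (1 - lowerToeplitz n G * (lowerToeplitz n G)ᴴ).PosSemidef := by
  set E := lowerToeplitz (n + 1) (1 + C (conj c) * (X * G))
  have hE : E = 1 + conj c • lowerToeplitz (n + 1) (X * G) := by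
    simp [E, lowerToeplitz_C]
  have hEU : E * lowerToeplitz (n + 1) F = c • 1 + lowerToeplitz (n + 1) (X * G) := by
    rw [← map_mul, mul_comm, h, map_add, lowerToeplitz_C]
  have hE_unit : IsUnit E := (isUnit_iff_constantCoeff.mpr (by simp)).map _
  have hpos : 0 < 1 - ‖c‖ ^ 2 := by nlinarith [norm_nonneg c]
  rw [← hE_unit.posSemidef_star_right_conjugate_iff, star_eq_conjTranspose,
    conj_one_sub_mul_conjTranspose hE hEU, posSemidef_real_smul_iff hpos,
    posSemidef_one_sub_lowerToeplitz_X_mul_iff]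

lemma X_pow_succ_dvd_sub_iff_of_schur_identity (n : ℕ) (hc : ‖c‖ < 1)
    (h : F * (1 + C (conj c) * (X * G)) = C c + X * G)
    (h' : F' * (1 + C (conj c) * (X * G')) = C c + X * G') :
    X ^ (n + 1) ∣ F - F' ↔ X ^ n ∣ G - G' := by
  have key : (F - F') * (1 + C (conj c) * (X * G)) = (1 - C (conj c) * F') * (X * (G - G')) := by
    linear_combination h - h'
  have hu : IsUnit (1 + C (conj c) * (X * G)) := isUnit_iff_constantCoeff.mpr (by simp)
  have hu' : IsUnit (1 - C (conj c) * F') := by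
    rw [isUnit_iff_constantCoeff, map_sub, map_mul, constantCoeff_C,
      constantCoeff_eq_of_schur_identity h', map_one]
    exact (one_sub_conj_mul_self_ne_zero hc).isUnit
  rw [← hu.dvd_mul_right, key, hu'.dvd_mul_left, pow_succ', mul_dvd_mul_iff_left X_ne_zero]

end SchurIdentity

section TaylorSeries

def taylorSeries (f : ℂ → ℂ) : PowerSeries ℂ := mk (tcoef f 0)

variable {f g : ℂ → ℂ}

lemma coeff_taylorSeries (k : ℕ) :
    coeff k (taylorSeries f) = iteratedDeriv k f 0 / (Nat.factorial k : ℂ) := coeff_mk _ _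

lemma constantCoeff_taylorSeries : constantCoeff (taylorSeries f) = f 0 := by
  simp [← coeff_zero_eq_constantCoeff_apply, coeff_taylorSeries]

lemma taylorSeries_congr (h : f =ᶠ[𝓝 0] g) : taylorSeries f = taylorSeries g := by
  ext k
  rw [coeff_taylorSeries, coeff_taylorSeries, h.iteratedDeriv_eq]

lemma taylorSeries_const (c : ℂ) : taylorSeries (fun _ => c) = C c := by
  ext k
  rw [coeff_taylorSeries, iteratedDeriv_const, coeff_C]
  split_ifs with hk <;> simp [hk]

lemma taylorSeries_id : taylorSeries id = X := by
  ext k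
  rw [coeff_taylorSeries, iteratedDeriv_id, coeff_X]
  rcases k with _ | _ | k <;> simp

lemma taylorSeries_add (hf : AnalyticAt ℂ f 0) (hg : AnalyticAt ℂ g 0) :
    taylorSeries (f + g) = taylorSeries f + taylorSeries g := by
  ext k
  simp only [coeff_taylorSeries, map_add, ← add_div]
  rw [iteratedDeriv_add hf.contDiffAt hg.contDiffAt]

lemma taylorSeries_mul (hf : AnalyticAt ℂ f 0) (hg : AnalyticAt ℂ g 0) :
    taylorSeries (f * g) = taylorSeries f * taylorSeries g := by
  ext k
  rw [coeff_mul, Finset.Nat.sum_antidiagonal_eq_sum_range_succ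
    (fun i j => coeff i (taylorSeries f) * coeff j (taylorSeries g)), coeff_taylorSeries,
    iteratedDeriv_mul hf.contDiffAt hg.contDiffAt, Finset.sum_div]
  refine Finset.sum_congr rfl fun i hi => ?_
  have hik : i ≤ k := Nat.lt_succ_iff.mp (Finset.mem_range.mp hi)
  rw [coeff_taylorSeries, coeff_taylorSeries]
  have hchoose : (k.choose i : ℂ) * (i.factorial * (k - i).factorial) = k.factorial := by
    rw [← Nat.choose_mul_factorial_mul_factorial hik]; push_cast; ring
  have hchoose_ne : (k.choose i : ℂ) ≠ 0 := by exact_mod_cast (Nat.choose_pos hik).ne'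
  rw [← hchoose]
  field_simp

lemma taylorSeries_schur_identity {c : ℂ} (hf : AnalyticAt ℂ f 0) (hg : AnalyticAt ℂ g 0)
    (h : ∀ᶠ z in 𝓝 0, f z * (1 + conj c * (z * g z)) = c + z * g z) :
    taylorSeries f * (1 + C (conj c) * (X * taylorSeries g)) = C c + X * taylorSeries g := by
  have h' := taylorSeries_congr h
  change taylorSeries (f * ((fun _ => 1) + (fun _ => conj c) * (id * g))) =
    taylorSeries ((fun _ => c) + id * g) at h'
  rwa [taylorSeries_mul hf (by fun_prop), taylorSeries_add (by fun_prop) (by fun_prop),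
    taylorSeries_mul (by fun_prop) (by fun_prop), taylorSeries_mul (by fun_prop) (by fun_prop),
    taylorSeries_add (by fun_prop) (by fun_prop), taylorSeries_mul (by fun_prop) (by fun_prop),
    taylorSeries_const, taylorSeries_const, taylorSeries_const, taylorSeries_id, map_one] at h'

end TaylorSeries

section SchurClass

variable {f g : ℂ → ℂ}

lemma mem_unitDisk_iff {z : ℂ} : z ∈ unitDisk ↔ ‖z‖ < 1 := mem_ball_zero_iff

lemma unitDisk_mem_nhds_zero : unitDisk ∈ 𝓝 (0 : ℂ) := ball_mem_nhds 0 one_pos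

lemma analyticAt_zero_of_mem_schurClass (hf : f ∈ SchurClass) : AnalyticAt ℂ f 0 :=
  hf.1.analyticAt unitDisk_mem_nhds_zero

lemma const_mem_schurClass {c : ℂ} (hc : ‖c‖ ≤ 1) : (fun _ => c) ∈ SchurClass :=
  ⟨differentiableOn_const c, fun _ _ => hc⟩

lemma taylorSeries_eq_C_of_norm_eq_one (hf : f ∈ SchurClass) (h1 : ‖f 0‖ = 1) :
    taylorSeries f = C (f 0) := by
  have hmax : IsMaxOn (norm ∘ f) unitDisk 0 := fun z hz => by
    simpa [h1] using hf.2 z hz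
  have hconst := Complex.eqOn_of_isPreconnected_of_isMaxOn_norm
    (convex_ball (0 : ℂ) 1).isPreconnected isOpen_ball hf.1 (mem_ball_self one_pos) hmax
  rw [taylorSeries_congr (Filter.eventually_of_mem unitDisk_mem_nhds_zero hconst)]
  exact taylorSeries_const _

lemma norm_sub_le_norm_one_sub_conj_mul {u v : ℂ} (hu : ‖u‖ ≤ 1) (hv : ‖v‖ ≤ 1) :
    ‖u - v‖ ≤ ‖1 - conj v * u‖ := by
  have key : Complex.normSq (1 - conj v * u) - Complex.normSq (u - v) =
      (1 - Complex.normSq u) * (1 - Complex.normSq v) := by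
    simp only [Complex.normSq_apply, Complex.sub_re, Complex.sub_im, Complex.mul_re,
      Complex.mul_im, Complex.one_re, Complex.one_im, Complex.conj_re, Complex.conj_im]
    ring
  have hu' : Complex.normSq u ≤ 1 := by rw [Complex.normSq_eq_norm_sq]; nlinarith [norm_nonneg u]
  have hv' : Complex.normSq v ≤ 1 := by rw [Complex.normSq_eq_norm_sq]; nlinarith [norm_nonneg v]
  rw [Complex.norm_def, Complex.norm_def]
  exact Real.sqrt_le_sqrt (by nlinarith)

lemma exists_mem_schurClass_reduction (hf : f ∈ SchurClass) (hc : ‖f 0‖ < 1) :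
    ∃ g ∈ SchurClass, ∀ z ∈ unitDisk, f z * (1 + conj (f 0) * (z * g z)) = f 0 + z * g z := by
  set c := f 0
  have hden (z) (hz : z ∈ unitDisk) : 1 - conj c * f z ≠ 0 := by
    have : ‖conj c * f z‖ < 1 := by
      rw [norm_mul, Complex.norm_conj]
      exact mul_lt_one_of_nonneg_of_lt_one_left (norm_nonneg _) hc (hf.2 z hz)
    exact sub_ne_zero.mpr fun h => by simp [← h] at this
  set h : ℂ → ℂ := fun z => (f z - c) / (1 - conj c * f z)
  have hh : DifferentiableOn ℂ h unitDisk :=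
    (hf.1.sub_const c).div ((differentiableOn_const 1).sub (hf.1.const_mul _)) hden
  have hh0 : h 0 = 0 := by simp [h, c]
  have hh1 : MapsTo h unitDisk (closedBall (h 0) 1) := fun z hz => by
    rw [hh0, mem_closedBall_zero_iff, norm_div]
    exact div_le_one_of_le₀ (norm_sub_le_norm_one_sub_conj_mul (hf.2 z hz) hc.le) (norm_nonneg _)
  refine ⟨dslope h 0, ⟨(differentiableOn_dslope unitDisk_mem_nhds_zero).mpr hh,
    fun z hz => by simpa using Complex.norm_dslope_le_div_of_mapsTo_ball hh hh1 hz⟩,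
    fun z hz => ?_⟩
  have hzg : z * dslope h 0 z = h z := by simpa [hh0] using sub_smul_dslope h 0 z
  have hdiv : h z * (1 - conj c * f z) = f z - c := div_mul_cancel₀ _ (hden z hz)
  rw [hzg]
  linear_combination -hdiv

lemma exists_mem_schurClass_extension {c : ℂ} (hg : g ∈ SchurClass) (hc : ‖c‖ ≤ 1) :
    ∃ f ∈ SchurClass, ∀ z ∈ unitDisk, f z * (1 + conj c * (z * g z)) = c + z * g z := by
  have hzg (z) (hz : z ∈ unitDisk) : ‖z * g z‖ < 1 := by
    rw [norm_mul]
    exact mul_lt_one_of_nonneg_of_lt_one_left (norm_nonneg _) (mem_unitDisk_iff.mp hz) (hg.2 z hz)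
  have hden (z) (hz : z ∈ unitDisk) : 1 + conj c * (z * g z) ≠ 0 := by
    have : ‖conj c * (z * g z)‖ < 1 := by
      rw [norm_mul, Complex.norm_conj]
      exact mul_lt_one_of_nonneg_of_lt_one_right hc (norm_nonneg _) (hzg z hz)
    exact fun h => by simp [eq_neg_of_add_eq_zero_right h] at this
  refine ⟨fun z => (c + z * g z) / (1 + conj c * (z * g z)), ⟨?_, fun z hz => ?_⟩,
    fun z hz => div_mul_cancel₀ _ (hden z hz)⟩
  · exact ((differentiableOn_const c).add (differentiableOn_id.mul hg.1)).div
      ((differentiableOn_const 1).add ((differentiableOn_id.mul hg.1).const_mul _)) hden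
  · rw [norm_div]
    refine div_le_one_of_le₀ ?_ (norm_nonneg _)
    calc ‖c + z * g z‖ = ‖-(z * g z) - c‖ := by rw [← norm_neg]; ring_nf
      _ ≤ ‖1 - conj c * -(z * g z)‖ :=
        norm_sub_le_norm_one_sub_conj_mul (by simpa using (hzg z hz).le) hc
      _ = ‖1 + conj c * (z * g z)‖ := by ring_nf

end SchurClass

lemma apply_zero_eq_of_X_pow_succ_dvd {n : ℕ} {f : ℂ → ℂ} {φ : PowerSeries ℂ}
    (h : X ^ (n + 1) ∣ taylorSeries f - φ) : f 0 = constantCoeff φ := by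
  have := X_dvd_iff.mp ((dvd_pow_self X n.succ_ne_zero).trans h)
  rwa [map_sub, constantCoeff_taylorSeries, sub_eq_zero] at this

lemma exists_mem_schurClass_iff_of_schur_identity {n : ℕ} {c : ℂ} {φ G : PowerSeries ℂ}
    (hc : ‖c‖ < 1) (hG : φ * (1 + C (conj c) * (X * G)) = C c + X * G) :
    (∃ f ∈ SchurClass, X ^ (n + 1) ∣ taylorSeries f - φ) ↔
      ∃ g ∈ SchurClass, X ^ n ∣ taylorSeries g - G := by
  have htaylor {f g : ℂ → ℂ} (hf : f ∈ SchurClass) (hg : g ∈ SchurClass)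
      (h : ∀ z ∈ unitDisk, f z * (1 + conj c * (z * g z)) = c + z * g z) :
      X ^ (n + 1) ∣ taylorSeries f - φ ↔ X ^ n ∣ taylorSeries g - G :=
    X_pow_succ_dvd_sub_iff_of_schur_identity n hc (taylorSeries_schur_identity
      (analyticAt_zero_of_mem_schurClass hf) (analyticAt_zero_of_mem_schurClass hg)
      (eventually_of_mem unitDisk_mem_nhds_zero h)) hG
  constructor
  · rintro ⟨f, hf, hfφ⟩
    have hf0 : f 0 = c :=
      (apply_zero_eq_of_X_pow_succ_dvd hfφ).trans (constantCoeff_eq_of_schur_identity hG)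
    obtain ⟨g, hg, hfg⟩ := exists_mem_schurClass_reduction hf (hf0 ▸ hc)
    exact ⟨g, hg, (htaylor hf hg (hf0 ▸ hfg)).mp hfφ⟩
  · rintro ⟨g, hg, hgG⟩
    obtain ⟨f, hf, hfg⟩ := exists_mem_schurClass_extension hg hc.le
    exact ⟨f, hf, (htaylor hf hg hfg).mpr hgG⟩

theorem exists_mem_schurClass_taylorSeries_iff (n : ℕ) (φ : PowerSeries ℂ) :
    (∃ f ∈ SchurClass, X ^ n ∣ taylorSeries f - φ) ↔
      (1 - lowerToeplitz n φ * (lowerToeplitz n φ)ᴴ).PosSemidef := by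
  induction n generalizing φ with
  | zero =>
    refine iff_of_true ⟨fun _ => 0, const_mem_schurClass (by simp), by simp⟩ ?_
    rw [Subsingleton.elim (1 - _) 0]
    exact PosSemidef.zero
  | succ n ih =>
    rcases lt_trichotomy ‖constantCoeff φ‖ 1 with hc | hc | hc
    · obtain ⟨G, hG⟩ := exists_schur_identity hc
      rw [posSemidef_schur_step_iff n hc hG, ← ih G,
        exists_mem_schurClass_iff_of_schur_identity hc hG]
    · rw [posSemidef_iff_X_pow_dvd_of_norm_eq_one hc]
      constructor
      · rintro ⟨f, hf, hfφ⟩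
        have hf0 := apply_zero_eq_of_X_pow_succ_dvd hfφ
        rw [← hf0, ← taylorSeries_eq_C_of_norm_eq_one hf (hf0 ▸ hc)]
        exact dvd_sub_comm.mp hfφ
      · exact fun h => ⟨_, const_mem_schurClass hc.le, taylorSeries_const _ ▸ dvd_sub_comm.mp h⟩
    · refine iff_of_false (fun ⟨f, hf, hfφ⟩ => ?_) fun h => ?_
      · exact (apply_zero_eq_of_X_pow_succ_dvd hfφ ▸ hc).not_ge (hf.2 0 (mem_ball_self one_pos))
      · exact hc.not_ge (norm_constantCoeff_le_one_of_posSemidef h)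

theorem schur_taylor_coefficient_criterion_general (n : ℕ) (s : ℕ → ℂ) :
    (∃ f ∈ SchurClass, ∀ j < n, iteratedDeriv j f 0 / (Nat.factorial j : ℂ) = s j) ↔
      (1 - Umat s n * (Umat s n)ᴴ).PosSemidef := by
  rw [← lowerToeplitz_mk, ← exists_mem_schurClass_taylorSeries_iff]
  simp only [X_pow_dvd_iff, map_sub, coeff_taylorSeries, coeff_mk, sub_eq_zero]

/-- **Schur's theorem.** There is a Schur-class function with prescribed Taylor
coefficients `s_0, …, s_{n−1}` at the origin iff `I − U^s_n (U^s_n)^*` is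
positive semidefinite. -/
theorem schur_taylor_coefficient_criterion (n : ℕ) (hn : 1 ≤ n) (s : ℕ → ℂ) :
    (∃ f ∈ SchurClass, ∀ j < n, iteratedDeriv j f 0 / (Nat.factorial j : ℂ) = s j) ↔
      (1 - Umat s n * (Umat s n)ᴴ).PosSemidef :=
  schur_taylor_coefficient_criterion_general n s
end
end

section
/- Let t_0 ∈ 𝕋, N ≥ 0 and s_0, …, s_N ∈ ℂ. (i) If the problem BP_N has a solution f ∈ 𝒮, then |s_0| ≤ 1. (ii) If |s_0| < 1, then the problem BP_N has a solution. -/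
open Complex Filter Matrix Metric Set Asymptotics
open scoped ComplexConjugate ComplexOrder Topology

noncomputable section

/-!
Necessity: the radius `x ↦ x t₀`, `x ↑ 1`, runs inside every Stolz angle at `t₀`, so `s₀` is a
limit of values of `f` in the disk.

Sufficiency: an entire solution is built by induction on `N`. The `(N+1)`-st Taylor coefficient at
`t₀` is corrected by adding `c (z - t₀)^(N+1) exp (λ t̄₀ (z - t₀))`, which does not change the lower
coefficients. Since `Re (t̄₀ (z - t₀)) ≤ -|z - t₀|²/2` on the disk, for `λ` large this term is
uniformly as small as we like there, so spending half of the remaining room `ρ - |s₀|` at each step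
keeps the bound below `1`. For an entire function the boundary derivatives are just its Taylor
coefficients at `t₀`.
-/

section TaylorCoefficients

variable {𝕜 : Type*} [NontriviallyNormedField 𝕜] [CharZero 𝕜] [CompleteSpace 𝕜]

lemma iteratedDeriv_pow_sub_mul_of_le {R : 𝕜 → 𝕜} (hR : ∀ z, AnalyticAt 𝕜 R z) (z₀ : 𝕜)
    {k n : ℕ} (hk : k ≤ n) :
    iteratedDeriv k (fun z => (z - z₀) ^ n * R z) z₀ = if k = n then n.factorial * R z₀ else 0 := by
  obtain ⟨R₂, -, hR₂⟩ := iteratedDeriv_mul_pow_sub_of_analytic (k := k) (t := n - k) (z₀ := z₀)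
    hR (fun z => by rw [Nat.add_sub_cancel' hk])
  rw [hR₂]
  split_ifs with hkn
  · subst hkn
    simp
  · simp [zero_pow (Nat.sub_ne_zero_of_lt (lt_of_le_of_ne hk hkn))]

end TaylorCoefficients

lemma tcoef_add {f g : ℂ → ℂ} (hf : Differentiable ℂ f) (hg : Differentiable ℂ g) (t0 : ℂ)
    (j : ℕ) : tcoef (fun z => f z + g z) t0 j = tcoef f t0 j + tcoef g t0 j := by
  simp only [tcoef, iteratedDeriv_fun_add (hf.contDiff.contDiffAt) (hg.contDiff.contDiffAt),
    add_div]

lemma tcoef_const_mul (c : ℂ) (f : ℂ → ℂ) (t0 : ℂ) (j : ℕ) :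
    tcoef (fun z => c * f z) t0 j = c * tcoef f t0 j := by
  simp only [tcoef, iteratedDeriv_const_mul_field, mul_div_assoc]

lemma tcoef_pow_sub_mul_of_le {R : ℂ → ℂ} (hR : Differentiable ℂ R) (t0 : ℂ) {k n : ℕ}
    (hk : k ≤ n) : tcoef (fun z => (z - t0) ^ n * R z) t0 k = if k = n then R t0 else 0 := by
  rw [tcoef, iteratedDeriv_pow_sub_mul_of_le (fun z => hR.analyticAt z) t0 hk]
  split_ifs with hkn
  · subst hkn
    field_simp
  · exact zero_div _

lemma tcoef_const_zero (c t0 : ℂ) : tcoef (fun _ => c) t0 0 = c := by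
  simp [tcoef]

lemma mul_exp_neg_sq_mul_sq_le {K : ℝ} (hK : 0 < K) (r : ℝ) :
    r * Real.exp (-(K ^ 2 * r ^ 2)) ≤ 1 / (2 * K) := by
  have hAMGM : 2 * K * r ≤ Real.exp (K ^ 2 * r ^ 2) := by
    nlinarith [Real.add_one_le_exp (K ^ 2 * r ^ 2), sq_nonneg (K * r - 1)]
  rw [Real.exp_neg, le_div_iff₀ (by positivity)]
  calc r * (Real.exp (K ^ 2 * r ^ 2))⁻¹ * (2 * K)
      = 2 * K * r * (Real.exp (K ^ 2 * r ^ 2))⁻¹ := by ring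
    _ ≤ Real.exp (K ^ 2 * r ^ 2) * (Real.exp (K ^ 2 * r ^ 2))⁻¹ := by gcongr
    _ = 1 := mul_inv_cancel₀ (Real.exp_pos _).ne'

lemma re_conj_mul_sub_le {t0 z : ℂ} (ht : ‖t0‖ = 1) (hz : ‖z‖ ≤ 1) :
    (conj t0 * (z - t0)).re ≤ -(‖z - t0‖ ^ 2 / 2) := by
  have hnormSq : ‖z - t0‖ ^ 2 = ‖z‖ ^ 2 + 1 - 2 * (conj t0 * z).re := by
    rw [← Complex.normSq_eq_norm_sq, Complex.normSq_sub, Complex.normSq_eq_norm_sq,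
      Complex.normSq_eq_norm_sq, ht, mul_comm z]
    ring
  have hconj : conj t0 * (z - t0) = conj t0 * z - 1 := by
    rw [mul_sub, mul_comm (conj t0) t0, Complex.mul_conj, Complex.normSq_eq_norm_sq, ht]
    simp
  rw [hconj, Complex.sub_re, Complex.one_re]
  nlinarith [norm_nonneg z]

lemma norm_pow_sub_mul_exp_le {t0 z : ℂ} (ht : ‖t0‖ = 1) (hz : ‖z‖ ≤ 1) {n : ℕ} (hn : n ≠ 0)
    {K : ℝ} (hK : 1 ≤ K) :
    ‖(z - t0) ^ n * Complex.exp ((2 * n * K ^ 2 : ℝ) * (conj t0 * (z - t0)))‖ ≤ 1 / (2 * K) := by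
  set r := ‖z - t0‖
  have hre := re_conj_mul_sub_le ht hz
  calc ‖(z - t0) ^ n * Complex.exp ((2 * n * K ^ 2 : ℝ) * (conj t0 * (z - t0)))‖
      = r ^ n * Real.exp (2 * n * K ^ 2 * (conj t0 * (z - t0)).re) := by
        rw [norm_mul, norm_pow, Complex.norm_exp, Complex.re_ofReal_mul]
    _ ≤ r ^ n * Real.exp (2 * n * K ^ 2 * -(r ^ 2 / 2)) := by gcongr
    _ = (r * Real.exp (-(K ^ 2 * r ^ 2))) ^ n := by
        rw [mul_pow, ← Real.exp_nat_mul]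
        ring_nf
    _ ≤ (1 / (2 * K)) ^ n := by
        gcongr
        exact mul_exp_neg_sq_mul_sq_le (by linarith) r
    _ ≤ 1 / (2 * K) := pow_le_of_le_one (by positivity)
        ((div_le_one (by linarith)).mpr (by linarith)) hn

theorem exists_differentiable_tcoef_eq {t0 : ℂ} (ht : ‖t0‖ = 1) (s : ℕ → ℂ) (N : ℕ) {ρ : ℝ}
    (hρ : ‖s 0‖ < ρ) :
    ∃ f : ℂ → ℂ, Differentiable ℂ f ∧ (∀ z ∈ unitDisk, ‖f z‖ ≤ ρ) ∧
      ∀ j ≤ N, tcoef f t0 j = s j := by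
  induction N generalizing ρ with
  | zero =>
    refine ⟨fun _ => s 0, differentiable_const _, fun _ _ => hρ.le, fun j hj => ?_⟩
    obtain rfl := Nat.le_zero.mp hj
    exact tcoef_const_zero _ _
  | succ N ih =>
    set ρ' := (‖s 0‖ + ρ) / 2
    obtain ⟨g, hg, hg_le, hg_coef⟩ := ih (ρ := ρ') (by simp only [ρ']; linarith)
    set c := s (N + 1) - tcoef g t0 (N + 1)
    set K := 1 + ‖c‖ / (ρ - ρ')
    have hρρ' : 0 < ρ - ρ' := by simp only [ρ']; linarith
    have hK : 1 ≤ K := le_add_of_nonneg_right (by positivity)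
    set h : ℂ → ℂ := fun z =>
      (z - t0) ^ (N + 1) * Complex.exp ((2 * (N + 1 : ℕ) * K ^ 2 : ℝ) * (conj t0 * (z - t0)))
    have hh : Differentiable ℂ h := by fun_prop
    have hh_coef (j : ℕ) (hj : j ≤ N + 1) : tcoef h t0 j = if j = N + 1 then 1 else 0 := by
      rw [tcoef_pow_sub_mul_of_le (by fun_prop) t0 hj]
      simp
    refine ⟨fun z => g z + c * h z, hg.add (hh.const_mul c), fun z hz => ?_, fun j hj => ?_⟩
    · have hz' : ‖z‖ ≤ 1 := (mem_ball_zero_iff.mp hz).le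
      have hcK : ‖c‖ * (1 / (2 * K)) ≤ ρ - ρ' := by
        have hcancel : (ρ - ρ') * (‖c‖ / (ρ - ρ')) = ‖c‖ := mul_div_cancel₀ _ hρρ'.ne'
        rw [mul_one_div, div_le_iff₀ (by positivity)]
        nlinarith [norm_nonneg c]
      calc ‖g z + c * h z‖ ≤ ‖g z‖ + ‖c‖ * ‖h z‖ := (norm_add_le _ _).trans_eq (by rw [norm_mul])
        _ ≤ ρ' + ‖c‖ * (1 / (2 * K)) := by
          gcongr
          · exact hg_le z hz
          · exact norm_pow_sub_mul_exp_le ht hz' N.succ_ne_zero hK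
        _ ≤ ρ := by linarith
    · rw [tcoef_add hg (hh.const_mul c), tcoef_const_mul, hh_coef j hj]
      rcases Nat.lt_or_eq_of_le hj with hlt | rfl
      · simp [hlt.ne, hg_coef j (Nat.lt_succ_iff.mp hlt)]
      · simp [c]

lemma Differentiable.hasBDeriv_tcoef {f : ℂ → ℂ} (hf : Differentiable ℂ f) (t0 : ℂ) (j : ℕ) :
    HasBDeriv f t0 j (tcoef f t0 j) := fun _ _ =>
  (((hf.contDiff (n := ⊤)).continuous_iteratedDeriv j le_top).tendsto t0).div_const _
    |>.mono_left nhdsWithin_le_nhds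

lemma tendsto_ofReal_mul_nhdsLT_stolzAngle {t0 : ℂ} (ht : ‖t0‖ = 1) {κ : ℝ} (hκ : 1 < κ) :
    Tendsto (fun x : ℝ => (x : ℂ) * t0) (𝓝[<] 1) (𝓝[stolzAngle t0 κ] t0) := by
  refine tendsto_nhdsWithin_iff.mpr ⟨?_, ?_⟩
  · exact ((Complex.continuous_ofReal.mul continuous_const).tendsto' 1 t0 (by simp)).mono_left
      nhdsWithin_le_nhds
  · filter_upwards [Ioo_mem_nhdsLT (zero_lt_one' ℝ)] with x ⟨hx0, hx1⟩
    have hnorm : ‖(x : ℂ) * t0‖ = x := by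
      rw [norm_mul, ht, Complex.norm_real, Real.norm_of_nonneg hx0.le, mul_one]
    have hdist : ‖(x : ℂ) * t0 - t0‖ = 1 - x := by
      rw [← sub_one_mul, norm_mul, ht, mul_one, ← Complex.ofReal_one, ← Complex.ofReal_sub,
        Complex.norm_real, Real.norm_of_nonpos (by linarith)]
      ring
    refine ⟨mem_ball_zero_iff.mpr (by rw [hnorm]; exact hx1), ?_⟩
    rw [hdist, hnorm]
    nlinarith

lemma norm_le_of_ntTendsto {g : ℂ → ℂ} {t0 L : ℂ} {C : ℝ} (ht : ‖t0‖ = 1)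
    (hg : NTTendsto g t0 L) (hC : ∀ z ∈ unitDisk, ‖g z‖ ≤ C) : ‖L‖ ≤ C := by
  have hradial := tendsto_ofReal_mul_nhdsLT_stolzAngle ht one_lt_two
  refine le_of_tendsto ((hg 2 one_lt_two).comp hradial).norm ?_
  filter_upwards [hradial.eventually self_mem_nhdsWithin] with x hx
  exact hC _ hx.1

/-- If `BP_N` has a solution then `|s_0| ≤ 1`; if `|s_0| < 1` then `BP_N` has a solution. -/
theorem bp_solvable_necessary_sufficient (t0 : ℂ) (ht : ‖t0‖ = 1) (N : ℕ)
    (s : ℕ → ℂ) :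
    ((∃ f, SolvesBP t0 s N f) → ‖s 0‖ ≤ 1) ∧
      (‖s 0‖ < 1 → ∃ f, SolvesBP t0 s N f) := by
  refine ⟨fun ⟨f, hf, hbd⟩ => ?_, fun hs0 => ?_⟩
  · have h0 : NTTendsto f t0 (s 0) := by simpa [HasBDeriv] using hbd 0 N.zero_le
    exact norm_le_of_ntTendsto ht h0 hf.2
  · obtain ⟨f, hf, hf_le, hf_coef⟩ := exists_differentiable_tcoef_eq ht s N hs0
    exact ⟨f, ⟨hf.differentiableOn, hf_le⟩, fun j hj => hf_coef j hj ▸ hf.hasBDeriv_tcoef t0 j⟩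
end
end

section
/- Let N ≥ 2, t_0 ∈ 𝕋 and s_0, …, s_N ∈ ℂ. Then the set of functions f ∈ 𝒮 solving the problem BP_N is either empty, or consists of exactly one function, or is infinite. -/
open Complex Filter Matrix Metric Set Asymptotics
open scoped ComplexConjugate ComplexOrder Topology

noncomputable section

/-! The solutions of `BP_N` form a convex set: the Schur class is convex, and the nontangential
boundary derivatives of a convex combination of solutions are the same convex combination of
theirs. A convex set with two distinct points contains the whole segment between them. -/

theorem Convex.eq_empty_or_eq_singleton_or_infinite {𝕜 E : Type*} [Field 𝕜] [LinearOrder 𝕜]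
    [IsStrictOrderedRing 𝕜] [AddCommGroup E] [Module 𝕜 E] {S : Set E} (hS : Convex 𝕜 S) :
    S = ∅ ∨ (∃ x, S = {x}) ∨ S.Infinite := by
  by_cases hsub : S.Subsingleton
  · exact hsub.eq_empty_or_singleton.imp_right Or.inl
  obtain ⟨x, hx, y, hy, hxy⟩ := Set.not_subsingleton_iff.1 hsub
  refine Or.inr (Or.inr (Set.Infinite.mono (hS.segment_subset hx hy) ?_))
  rw [segment_eq_image_lineMap]
  exact (Set.Icc_infinite zero_lt_one).image (AffineMap.lineMap_injective 𝕜 hxy).injOn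

lemma NTTendsto.congr_unitDisk {g h : ℂ → ℂ} {t0 L : ℂ} (hg : NTTendsto g t0 L)
    (hgh : EqOn g h unitDisk) : NTTendsto h t0 L := fun κ hκ =>
  (hg κ hκ).congr' (eventually_nhdsWithin_of_forall fun _ hz => hgh hz.1)

lemma DifferentiableOn.contDiffAt_unitDisk {f : ℂ → ℂ} (hf : DifferentiableOn ℂ f unitDisk)
    {z : ℂ} (hz : z ∈ unitDisk) (n : ℕ) : ContDiffAt ℂ n f z :=
  (hf.contDiffOn isOpen_ball).contDiffAt (isOpen_ball.mem_nhds hz)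

lemma HasBDeriv.add {f g : ℂ → ℂ} {t0 a b : ℂ} {j : ℕ} (hf : DifferentiableOn ℂ f unitDisk)
    (hg : DifferentiableOn ℂ g unitDisk) (hfa : HasBDeriv f t0 j a) (hgb : HasBDeriv g t0 j b) :
    HasBDeriv (f + g) t0 j (a + b) := by
  refine NTTendsto.congr_unitDisk (fun κ hκ => (hfa κ hκ).add (hgb κ hκ)) fun z hz => ?_
  simp only [iteratedDeriv_add (hf.contDiffAt_unitDisk hz j) (hg.contDiffAt_unitDisk hz j),
    add_div]

lemma HasBDeriv.const_smul {f : ℂ → ℂ} {t0 a : ℂ} {j : ℕ} (hf : DifferentiableOn ℂ f unitDisk)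
    (hfa : HasBDeriv f t0 j a) (c : ℝ) : HasBDeriv (c • f) t0 j (c • a) := by
  refine NTTendsto.congr_unitDisk (fun κ hκ => (hfa κ hκ).const_smul c) fun z hz => ?_
  simp only [iteratedDeriv_const_smul (hf.contDiffAt_unitDisk hz j), smul_div_assoc]

lemma convex_schurClass : Convex ℝ SchurClass := by
  rintro f ⟨hf, hf1⟩ g ⟨hg, hg1⟩ a b ha hb hab
  refine ⟨(hf.const_smul a).add (hg.const_smul b), fun z hz => ?_⟩
  simpa using convex_closedBall (0 : ℂ) 1 (by simpa using hf1 z hz) (by simpa using hg1 z hz)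
    ha hb hab

lemma convex_setOf_solvesBP (t0 : ℂ) (s : ℕ → ℂ) (N : ℕ) :
    Convex ℝ {f | SolvesBP t0 s N f} := by
  rintro f ⟨hfS, hf⟩ g ⟨hgS, hg⟩ a b ha hb hab
  refine ⟨convex_schurClass hfS hgS ha hb hab, fun j hj => ?_⟩
  rw [← Convex.combo_self hab (s j)]
  exact ((hf j hj).const_smul hfS.1 a).add (hfS.1.const_smul a) (hgS.1.const_smul b)
    ((hg j hj).const_smul hgS.1 b)

lemma convex_solSet (t0 : ℂ) (s : ℕ → ℂ) (N : ℕ) : Convex ℝ (solSet t0 s N) := by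
  have hsol : solSet t0 s N = LinearMap.funLeft ℝ ℂ Subtype.val '' {f | SolvesBP t0 s N f} :=
    ext fun _ => ⟨fun ⟨f, hf, hg⟩ => ⟨f, hf, hg.symm⟩, fun ⟨f, hf, hg⟩ => ⟨f, hf, hg.symm⟩⟩
  rw [hsol]
  exact (convex_setOf_solvesBP t0 s N).linear_image _

theorem bp_solution_set_trichotomy_general (N : ℕ) (t0 : ℂ) (s : ℕ → ℂ) :
    solSet t0 s N = ∅ ∨ (∃ g, solSet t0 s N = {g}) ∨ (solSet t0 s N).Infinite :=
  (convex_solSet t0 s N).eq_empty_or_eq_singleton_or_infinite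

/-- The solution set of `BP_N` (identifying functions equal on the unit disk) is either
empty, a singleton, or infinite. -/
theorem bp_solution_set_trichotomy (N : ℕ) (hN : 2 ≤ N) (t0 : ℂ)
    (ht : ‖t0‖ = 1) (s : ℕ → ℂ) :
    solSet t0 s N = ∅ ∨ (∃ g, solSet t0 s N = {g}) ∨ (solSet t0 s N).Infinite :=
  bp_solution_set_trichotomy_general N t0 s
end
end

section
/- There is exactly one function f ∈ 𝒮 such that f(z) = 1 + (z − 1) + o(|z − 1|³) as z →∠ 1, namely the identity function f(z) = z. In particular, if f ∈ 𝒮 and f(z) = z + o(|z − 1|³) as z →∠ 1, then f(z) = z for all z ∈ 𝔻. -/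
open Complex Filter Matrix Metric Set Asymptotics
open scoped ComplexConjugate ComplexOrder Topology

noncomputable section

/-! Along the radius, `f x = x + o((1 - x)³)` gives `f x → 1` with angular derivative `1`, so
by Julia's lemma the difference `p = cayley ∘ f - cayley` of Cayley transforms
`cayley w = (1 + w) / (1 - w)` has nonnegative real part. The cubic order of contact makes
`p x = o(1 - x)`, while Harnack's inequality gives `‖p 0‖ (1 - ‖x‖) ≤ 2 ‖p x‖`. Hence
`p 0 = 0`, and the minimum principle for `re p` forces `p = 0`, that is, `f = id`. -/

theorem mem_ball_zero_one_iff_normSq {z : ℂ} : z ∈ ball (0 : ℂ) 1 ↔ normSq z < 1 := by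
  rw [mem_ball_zero_iff, ← sq_lt_one_iff₀ (norm_nonneg z), Complex.sq_norm]

theorem normSq_one_sub_conj_mul_sub_normSq_sub (a z : ℂ) :
    normSq (1 - conj a * z) - normSq (z - a) = (1 - normSq a) * (1 - normSq z) := by
  simp only [normSq_apply, sub_re, sub_im, mul_re, mul_im, one_re, one_im, conj_re, conj_im]
  ring

theorem normSq_add_conj_sub_normSq_sub (w a : ℂ) :
    normSq (w + conj a) - normSq (w - a) = 4 * a.re * w.re := by
  simp only [normSq_apply, add_re, add_im, sub_re, sub_im, conj_re, conj_im]
  ring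

theorem one_sub_conj_mul_ne_zero {a z : ℂ} (ha : a ∈ ball (0 : ℂ) 1)
    (hz : z ∈ ball (0 : ℂ) 1) : 1 - conj a * z ≠ 0 := by
  rw [mem_ball_zero_iff] at ha hz
  refine sub_ne_zero.2 fun h => (?_ : ‖conj a * z‖ < 1).ne (by rw [← h, norm_one])
  rw [norm_mul, norm_conj]
  exact mul_lt_one_of_nonneg_of_lt_one_left (norm_nonneg a) ha hz.le

def mobius (a z : ℂ) : ℂ := (z - a) / (1 - conj a * z)

theorem mobius_self (a : ℂ) : mobius a a = 0 := by simp [mobius]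

theorem mobius_neg_apply_zero (a : ℂ) : mobius (-a) 0 = a := by simp [mobius]

theorem mobius_mem_ball {a z : ℂ} (ha : a ∈ ball (0 : ℂ) 1) (hz : z ∈ ball (0 : ℂ) 1) :
    mobius a z ∈ ball (0 : ℂ) 1 := by
  have hden := normSq_pos.2 (one_sub_conj_mul_ne_zero ha hz)
  have hpos := mul_pos (sub_pos.2 (mem_ball_zero_one_iff_normSq.1 ha))
    (sub_pos.2 (mem_ball_zero_one_iff_normSq.1 hz))
  rw [mem_ball_zero_one_iff_normSq, mobius, normSq_div, div_lt_one hden]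
  linarith [normSq_one_sub_conj_mul_sub_normSq_sub a z]

theorem mobius_neg_mobius {a z : ℂ} (ha : a ∈ ball (0 : ℂ) 1) (hz : z ∈ ball (0 : ℂ) 1) :
    mobius (-a) (mobius a z) = z := by
  have hden := one_sub_conj_mul_ne_zero ha hz
  have hca : conj a * a = normSq a := normSq_eq_conj_mul_self.symm
  have ha' : (1 : ℂ) - normSq a ≠ 0 := by
    exact_mod_cast (sub_pos.2 (mem_ball_zero_one_iff_normSq.1 ha)).ne'
  simp only [mobius, map_neg, neg_mul, sub_neg_eq_add]
  have hD : 1 - conj a * z + conj a * (z - a) = 1 - normSq a := by linear_combination -hca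
  rw [div_add' _ _ _ hden, mul_div_assoc', one_add_div hden, div_div_div_cancel_right₀ hden, hD,
    div_eq_iff ha']
  linear_combination (-z) * hca

theorem differentiableAt_mobius {a z : ℂ} (h : 1 - conj a * z ≠ 0) :
    DifferentiableAt ℂ (mobius a) z :=
  (differentiableAt_id.sub_const a).div ((differentiableAt_const _).sub
    ((differentiableAt_const _).mul differentiableAt_id)) h

section SchwarzPick

variable {f : ℂ → ℂ}

/-- Schwarz lemma applied to `mobius (f a) ∘ f ∘ mobius (-a)`, which fixes `0`. -/
theorem norm_mobius_apply_le (hd : DifferentiableOn ℂ f (ball 0 1))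
    (hm : MapsTo f (ball 0 1) (ball 0 1)) {a z : ℂ} (ha : a ∈ ball (0 : ℂ) 1)
    (hz : z ∈ ball (0 : ℂ) 1) : ‖mobius (f a) (f z)‖ ≤ ‖mobius a z‖ := by
  have hna : -a ∈ ball (0 : ℂ) 1 := by rwa [mem_ball_zero_iff, norm_neg, ← mem_ball_zero_iff]
  have hgm : MapsTo (fun w => mobius (f a) (f (mobius (-a) w))) (ball 0 1) (ball 0 1) :=
    fun w hw => mobius_mem_ball (hm ha) (hm (mobius_mem_ball hna hw))
  have hgd : DifferentiableOn ℂ (fun w => mobius (f a) (f (mobius (-a) w))) (ball 0 1) := by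
    intro w hw
    have hw' := mobius_mem_ball hna hw
    refine (((differentiableAt_mobius (one_sub_conj_mul_ne_zero (hm ha) (hm hw'))).comp _
      (hd.differentiableAt (isOpen_ball.mem_nhds hw'))).comp _
      (differentiableAt_mobius (one_sub_conj_mul_ne_zero hna hw))).differentiableWithinAt
  have h := Complex.norm_le_norm_of_mapsTo_ball hgd (hgm.mono_right ball_subset_closedBall)
    (by simp only [mobius_neg_apply_zero, mobius_self])
    (mem_ball_zero_iff.1 (mobius_mem_ball ha hz))
  rwa [mobius_neg_mobius ha hz] at h

/-- The Schwarz–Pick inequality, cleared of denominators via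
`1 - |mobius a z|² = (1 - |a|²) (1 - |z|²) / |1 - ā z|²`. -/
theorem schwarz_pick (hd : DifferentiableOn ℂ f (ball 0 1))
    (hm : MapsTo f (ball 0 1) (ball 0 1)) {a z : ℂ} (ha : a ∈ ball (0 : ℂ) 1)
    (hz : z ∈ ball (0 : ℂ) 1) :
    (1 - normSq a) * (1 - normSq z) * normSq (1 - conj (f a) * f z)
      ≤ (1 - normSq (f a)) * (1 - normSq (f z)) * normSq (1 - conj a * z) := by
  have hD := normSq_pos.2 (one_sub_conj_mul_ne_zero ha hz)
  have hfD := normSq_pos.2 (one_sub_conj_mul_ne_zero (hm ha) (hm hz))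
  have h := pow_le_pow_left₀ (norm_nonneg _) (norm_mobius_apply_le hd hm ha hz) 2
  rw [Complex.sq_norm, Complex.sq_norm, mobius, mobius, normSq_div, normSq_div,
    div_le_div_iff₀ hfD hD] at h
  linear_combination h
    + normSq (1 - conj a * z) * normSq_one_sub_conj_mul_sub_normSq_sub (f a) (f z)
    - normSq (1 - conj (f a) * f z) * normSq_one_sub_conj_mul_sub_normSq_sub a z

end SchwarzPick

def cayley (w : ℂ) : ℂ := (1 + w) / (1 - w)

theorem re_cayley {w : ℂ} (hw : w ≠ 1) :
    (cayley w).re = (1 - normSq w) / normSq (1 - w) := by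
  have h : normSq (1 - w) ≠ 0 := normSq_pos.2 (sub_ne_zero.2 hw.symm) |>.ne'
  rw [cayley, div_re]
  simp only [normSq_apply, add_re, add_im, sub_re, sub_im, one_re, one_im] at h ⊢
  field_simp
  ring

theorem cayley_sub_cayley {w z : ℂ} (hw : w ≠ 1) (hz : z ≠ 1) :
    cayley w - cayley z = 2 * (w - z) / ((1 - w) * (1 - z)) := by
  rw [cayley, cayley, div_sub_div _ _ (sub_ne_zero.2 hw.symm) (sub_ne_zero.2 hz.symm)]
  ring

theorem differentiableAt_cayley {w : ℂ} (hw : w ≠ 1) : DifferentiableAt ℂ cayley w :=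
  ((differentiableAt_const 1).add differentiableAt_id).div
    ((differentiableAt_const 1).sub differentiableAt_id) (sub_ne_zero.2 hw.symm)

theorem ne_one_of_mem_ball {z : ℂ} (hz : z ∈ ball (0 : ℂ) 1) : z ≠ 1 := by
  rintro rfl
  simp at hz

/-- **Julia's lemma**. Since `re (cayley z) = (1 - |z|²) / |1 - z|²`, the conclusion says that
`f` maps each horodisk at `1` into a horodisk at `1` dilated by `L`. -/
theorem julia {α : Type*} {l : Filter α} [l.NeBot] {f : ℂ → ℂ} {w : α → ℂ} {L : ℝ}
    (hd : DifferentiableOn ℂ f (ball 0 1)) (hm : MapsTo f (ball 0 1) (ball 0 1))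
    (hw : ∀ᶠ t in l, w t ∈ ball (0 : ℂ) 1) (hw1 : Tendsto w l (𝓝 1))
    (hfw : Tendsto (fun t => f (w t)) l (𝓝 1))
    (hL : Tendsto (fun t => (1 - normSq (f (w t))) / (1 - normSq (w t))) l (𝓝 L))
    {z : ℂ} (hz : z ∈ ball (0 : ℂ) 1) :
    (cayley z).re ≤ L * (cayley (f z)).re := by
  have hstar : ∀ᶠ t in l, (1 - normSq z) * normSq (1 - conj (f (w t)) * f z)
      ≤ (1 - normSq (f (w t))) / (1 - normSq (w t))
        * ((1 - normSq (f z)) * normSq (1 - conj (w t) * z)) := by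
    filter_upwards [hw] with t ht
    have hpos : 0 < 1 - normSq (w t) := sub_pos.2 (mem_ball_zero_one_iff_normSq.1 ht)
    rw [div_mul_eq_mul_div, le_div_iff₀ hpos]
    linarith [schwarz_pick hd hm ht hz]
  have hlim : ∀ {v : α → ℂ}, Tendsto v l (𝓝 1) → ∀ u : ℂ,
      Tendsto (fun t => normSq (1 - conj (v t) * u)) l (𝓝 (normSq (1 - u))) := fun hv u => by
    simpa [Function.comp_def] using
      ((by fun_prop : Continuous fun v => normSq (1 - conj v * u)).tendsto 1).comp hv
  have key := le_of_tendsto_of_tendsto ((hlim hfw (f z)).const_mul _)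
    (hL.mul ((hlim hw1 z).const_mul _)) hstar
  have hfz := ne_one_of_mem_ball (hm hz)
  rw [re_cayley (ne_one_of_mem_ball hz), re_cayley hfz, ← mul_div_assoc,
    div_le_div_iff₀ (normSq_pos.2 (sub_ne_zero.2 (ne_one_of_mem_ball hz).symm))
      (normSq_pos.2 (sub_ne_zero.2 hfz.symm))]
  linarith

theorem norm_le_norm_of_normSq_le {x y : ℂ} (h : normSq x ≤ normSq y) : ‖x‖ ≤ ‖y‖ := by
  rwa [← sq_le_sq₀ (norm_nonneg x) (norm_nonneg y), Complex.sq_norm, Complex.sq_norm]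

section PositiveRealPart

variable {p : ℂ → ℂ}

theorem add_conj_ne_zero_of_re_pos {w a : ℂ} (hw : 0 ≤ w.re) (ha : 0 < a.re) :
    w + conj a ≠ 0 := by
  intro h
  have := congrArg re h
  simp only [add_re, conj_re, zero_re] at this
  linarith

/-- Harnack's inequality, from the Schwarz lemma applied to `(p - p 0) / (p + conj (p 0))`. -/
theorem norm_mul_one_sub_norm_le_of_re_pos (hp : DifferentiableOn ℂ p (ball 0 1))
    (hre : ∀ z ∈ ball (0 : ℂ) 1, 0 < (p z).re) {z : ℂ} (hz : z ∈ ball (0 : ℂ) 1) :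
    ‖p 0‖ * (1 - ‖z‖) ≤ 2 * ‖p z‖ := by
  set a := p 0
  have ha : 0 < a.re := hre 0 (mem_ball_self one_pos)
  have hden : ∀ w ∈ ball (0 : ℂ) 1, p w + conj a ≠ 0 := fun w hw =>
    add_conj_ne_zero_of_re_pos (hre w hw).le ha
  have hφm : MapsTo (fun w => (p w - a) / (p w + conj a)) (ball 0 1) (closedBall 0 1) := by
    intro w hw
    rw [mem_closedBall_zero_iff, norm_div, div_le_one (norm_pos_iff.2 (hden w hw))]
    refine norm_le_norm_of_normSq_le ?_
    nlinarith [normSq_add_conj_sub_normSq_sub (p w) a, hre w hw]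
  have hφd : DifferentiableOn ℂ (fun w => (p w - a) / (p w + conj a)) (ball 0 1) :=
    (hp.sub_const a).div (hp.add_const _) hden
  have hs := Complex.norm_le_norm_of_mapsTo_ball hφd hφm (by simp [a]) (mem_ball_zero_iff.1 hz)
  rw [norm_div, div_le_iff₀ (norm_pos_iff.2 (hden z hz))] at hs
  have h1 : ‖a‖ - ‖p z‖ ≤ ‖p z - a‖ := by rw [norm_sub_rev]; exact norm_sub_norm_le a (p z)
  have h2 : ‖p z + conj a‖ ≤ ‖p z‖ + ‖a‖ := (norm_add_le _ _).trans_eq (by rw [norm_conj])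
  have hz1 := mem_ball_zero_iff.1 hz
  nlinarith [mul_le_mul_of_nonneg_left h2 (norm_nonneg z), norm_nonneg (p z)]

theorem norm_mul_one_sub_norm_le_of_re_nonneg (hp : DifferentiableOn ℂ p (ball 0 1))
    (hre : ∀ z ∈ ball (0 : ℂ) 1, 0 ≤ (p z).re) {z : ℂ} (hz : z ∈ ball (0 : ℂ) 1) :
    ‖p 0‖ * (1 - ‖z‖) ≤ 2 * ‖p z‖ := by
  refine le_of_forall_pos_le_add fun ε hε => ?_
  set δ := ε / 3 with hδε
  have hδ : 0 < δ := by positivity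
  have h := norm_mul_one_sub_norm_le_of_re_pos (p := fun w => p w + δ) (hp.add_const _)
    (fun w hw => by simpa using add_pos_of_nonneg_of_pos (hre w hw) hδ) hz
  have h1 : ‖p 0‖ ≤ ‖p 0 + δ‖ + δ := by
    simpa [abs_of_pos hδ] using norm_le_norm_add_norm_sub' (p 0) (p 0 + δ)
  have h2 : ‖p z + δ‖ ≤ ‖p z‖ + δ := by simpa [abs_of_pos hδ] using norm_add_le (p z) δ
  have hz1 := mem_ball_zero_iff.1 hz
  nlinarith [mul_le_mul_of_nonneg_right h1 (sub_nonneg.2 hz1.le),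
    mul_nonneg hδ.le (norm_nonneg z)]

/-- Minimum principle for `re p`, via the maximum modulus principle for `(p - 1) / (p + 1)`. -/
theorem eqOn_zero_of_re_nonneg {U : Set ℂ} {c : ℂ} (hU : IsPreconnected U) (ho : IsOpen U)
    (hp : DifferentiableOn ℂ p U) (hre : ∀ z ∈ U, 0 ≤ (p z).re) (hc : c ∈ U) (hpc : p c = 0) :
    EqOn p 0 U := by
  have hden : ∀ z ∈ U, p z + 1 ≠ 0 := fun z hz => by
    simpa using add_conj_ne_zero_of_re_pos (hre z hz) (a := 1) (by simp)
  have hmax : IsMaxOn (fun z => ‖(p z - 1) / (p z + 1)‖) U c := by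
    intro z hz
    simp only [mem_ofPred_eq, hpc, zero_sub, zero_add, div_one, norm_neg, norm_one, norm_div]
    rw [div_le_one (norm_pos_iff.2 (hden z hz))]
    have h := normSq_add_conj_sub_normSq_sub (p z) 1
    simp only [map_one, one_re] at h
    exact norm_le_norm_of_normSq_le (by linarith [hre z hz])
  have hψd : DifferentiableOn ℂ (fun z => (p z - 1) / (p z + 1)) U :=
    (hp.sub_const 1).div (hp.add_const 1) hden
  have hconst := Complex.eqOn_of_isPreconnected_of_isMaxOn_norm hU ho hψd hc hmax
  intro z hz
  have h := hconst hz
  simp only [Function.const_apply, hpc, zero_sub, zero_add, div_one] at h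
  rw [div_eq_iff (hden z hz)] at h
  simpa using (by linear_combination h / 2 : p z = 0)

end PositiveRealPart

section Radial

theorem ofReal_mem_ball {x : ℝ} (hx : x ∈ Ioo 0 1) : (x : ℂ) ∈ ball (0 : ℂ) 1 := by
  rw [mem_ball_zero_iff, norm_real, Real.norm_of_nonneg hx.1.le]
  exact hx.2

theorem norm_one_sub_ofReal {x : ℝ} (hx : x ≤ 1) : ‖(1 : ℂ) - x‖ = 1 - x := by
  rw [← ofReal_one, ← ofReal_sub, norm_real, Real.norm_of_nonneg (sub_nonneg.2 hx)]

theorem one_sub_ofReal_ne_zero {x : ℝ} (hx : x < 1) : (1 : ℂ) - x ≠ 0 :=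
  sub_ne_zero.2 (by exact_mod_cast hx.ne')

theorem tendsto_ofReal_nhdsLT : Tendsto (fun x : ℝ => (x : ℂ)) (𝓝[<] 1) (𝓝 1) := by
  simpa using (continuous_ofReal.tendsto 1).mono_left nhdsWithin_le_nhds

theorem tendsto_ofReal_nhdsLT_stolzAngle {κ : ℝ} (hκ : 1 < κ) :
    Tendsto (fun x : ℝ => (x : ℂ)) (𝓝[<] 1) (𝓝[stolzAngle 1 κ] 1) := by
  refine tendsto_nhdsWithin_of_tendsto_nhds_of_eventually_within _ tendsto_ofReal_nhdsLT ?_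
  filter_upwards [Ioo_mem_nhdsLT one_pos] with x hx
  refine ⟨ofReal_mem_ball hx, ?_⟩
  rw [norm_sub_rev, norm_one_sub_ofReal hx.2.le, norm_real, Real.norm_of_nonneg hx.1.le]
  nlinarith [hx.2]

variable {f : ℂ → ℂ}

theorem tendsto_sub_div_one_sub_of_tendsto_sub_div_pow
    (h : Tendsto (fun x : ℝ => (f x - x) / (x - 1) ^ 3) (𝓝[<] 1) (𝓝 0)) :
    Tendsto (fun x : ℝ => (f x - x) / (1 - x)) (𝓝[<] 1) (𝓝 0) := by
  have h2 := (h.mul ((tendsto_ofReal_nhdsLT.sub_const 1).pow 2)).neg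
  rw [sub_self, zero_pow two_ne_zero, mul_zero, neg_zero] at h2
  refine h2.congr' ?_
  filter_upwards [self_mem_nhdsWithin] with x hx
  have hx1 : (x : ℂ) - 1 ≠ 0 := by rw [← neg_sub, neg_ne_zero]; exact one_sub_ofReal_ne_zero hx
  have hx1' := one_sub_ofReal_ne_zero hx
  field_simp
  ring

theorem tendsto_apply_radial
    (hg : Tendsto (fun x : ℝ => (f x - x) / (1 - x)) (𝓝[<] 1) (𝓝 0)) :
    Tendsto (fun x : ℝ => f x) (𝓝[<] 1) (𝓝 1) := by
  have h := (hg.mul (tendsto_ofReal_nhdsLT.const_sub 1)).add tendsto_ofReal_nhdsLT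
  rw [sub_self, mul_zero, zero_add] at h
  refine h.congr' ?_
  filter_upwards [self_mem_nhdsWithin] with x hx
  have hx1 := one_sub_ofReal_ne_zero hx
  field_simp
  ring

theorem tendsto_julia_ratio_radial
    (hg : Tendsto (fun x : ℝ => (f x - x) / (1 - x)) (𝓝[<] 1) (𝓝 0))
    (hb : ∀ z ∈ ball (0 : ℂ) 1, ‖f z‖ ≤ 1) :
    Tendsto (fun x : ℝ => (1 - normSq (f x)) / (1 - normSq (x : ℂ))) (𝓝[<] 1) (𝓝 1) := by
  have hbound : ∀ᶠ x : ℝ in 𝓝[<] 1,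
      ‖(1 - normSq (f x)) / (1 - normSq (x : ℂ)) - 1‖ ≤ 2 * ‖(f x - x) / (1 - x)‖ := by
    filter_upwards [Ioo_mem_nhdsLT one_pos] with x hx
    have hu := hb x (ofReal_mem_ball hx)
    have hux : |x - ‖f x‖| ≤ ‖f x - x‖ := by
      simpa [abs_sub_comm, Real.norm_of_nonneg hx.1.le] using abs_norm_sub_norm_le (f x) x
    have hden : 0 < 1 - x * x := by nlinarith [hx.1, hx.2]
    rw [normSq_ofReal, ← Complex.sq_norm, norm_div, norm_one_sub_ofReal hx.2.le,
      Real.norm_eq_abs]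
    calc |(1 - ‖f x‖ ^ 2) / (1 - x * x) - 1|
        = |x - ‖f x‖| * (x + ‖f x‖) / (1 - x * x) := by
          rw [div_sub_one hden.ne', abs_div, abs_of_pos hden,
            show 1 - ‖f x‖ ^ 2 - (1 - x * x) = (x - ‖f x‖) * (x + ‖f x‖) by ring, abs_mul,
            abs_of_nonneg (by linarith [hx.1, norm_nonneg (f x)] : 0 ≤ x + ‖f x‖)]
      _ ≤ ‖f x - x‖ * 2 / (1 - x) :=
          div_le_div₀ (by positivity) (mul_le_mul hux (by linarith [hx.2])
            (by linarith [hx.1, norm_nonneg (f x)])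
            (norm_nonneg _)) (by linarith [hx.2]) (by nlinarith [hx.1, hx.2])
      _ = 2 * (‖f x - x‖ / (1 - x)) := by ring
  have h := squeeze_zero_norm' hbound (by simpa using hg.norm.const_mul 2)
  simpa using h.add_const 1

theorem mapsTo_ball_of_tendsto_radial (hd : DifferentiableOn ℂ f (ball 0 1))
    (hb : ∀ z ∈ ball (0 : ℂ) 1, ‖f z‖ ≤ 1)
    (hg : Tendsto (fun x : ℝ => (f x - x) / (1 - x)) (𝓝[<] 1) (𝓝 0)) :
    MapsTo f (ball 0 1) (ball 0 1) := by
  intro c hc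
  refine mem_ball_zero_iff.2 ((hb c hc).lt_of_ne fun h1 => ?_)
  have hconst := Complex.eqOn_of_isPreconnected_of_isMaxOn_norm (convex_ball 0 1).isPreconnected
    isOpen_ball hd hc (fun z hz => by simpa [h1] using hb z hz)
  have hfx : ∀ᶠ x : ℝ in 𝓝[<] 1, f x = f c := by
    filter_upwards [Ioo_mem_nhdsLT one_pos] with x hx using hconst (ofReal_mem_ball hx)
  have hc1 : f c = 1 := tendsto_nhds_unique
    (tendsto_const_nhds.congr' (hfx.mono fun _ hx => hx.symm)) (tendsto_apply_radial hg)
  have h1 : Tendsto (fun x : ℝ => (f x - x) / (1 - x)) (𝓝[<] 1) (𝓝 1) := by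
    refine tendsto_const_nhds.congr' ?_
    filter_upwards [hfx, self_mem_nhdsWithin] with x hx hx1
    rw [hx, hc1, div_self (one_sub_ofReal_ne_zero hx1)]
  exact one_ne_zero (tendsto_nhds_unique h1 hg)

theorem re_cayley_le_re_cayley_of_tendsto_radial (hd : DifferentiableOn ℂ f (ball 0 1))
    (hb : ∀ z ∈ ball (0 : ℂ) 1, ‖f z‖ ≤ 1)
    (hg : Tendsto (fun x : ℝ => (f x - x) / (1 - x)) (𝓝[<] 1) (𝓝 0))
    {z : ℂ} (hz : z ∈ ball (0 : ℂ) 1) : (cayley z).re ≤ (cayley (f z)).re := by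
  have hw : ∀ᶠ x : ℝ in 𝓝[<] 1, (x : ℂ) ∈ ball (0 : ℂ) 1 := by
    filter_upwards [Ioo_mem_nhdsLT one_pos] with x hx using ofReal_mem_ball hx
  simpa using julia hd (mapsTo_ball_of_tendsto_radial hd hb hg) hw tendsto_ofReal_nhdsLT
    (tendsto_apply_radial hg) (tendsto_julia_ratio_radial hg hb) hz

theorem tendsto_cayley_sub_cayley_div_radial (hm : MapsTo f (ball 0 1) (ball 0 1))
    (h : Tendsto (fun x : ℝ => (f x - x) / (x - 1) ^ 3) (𝓝[<] 1) (𝓝 0)) :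
    Tendsto (fun x : ℝ => (cayley (f x) - cayley x) / (1 - x)) (𝓝[<] 1) (𝓝 0) := by
  have hq : Tendsto (fun x : ℝ => (1 - x) / (1 - f x)) (𝓝[<] 1) (𝓝 1) := by
    have h1 := ((tendsto_sub_div_one_sub_of_tendsto_sub_div_pow h).const_sub 1).inv₀
      (by norm_num)
    rw [sub_zero, inv_one] at h1
    refine h1.congr' ?_
    filter_upwards [self_mem_nhdsWithin] with x hx
    rw [one_sub_div (one_sub_ofReal_ne_zero hx), sub_sub_sub_cancel_right, inv_div]
  have h2 := (h.mul hq).const_mul (-2)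
  rw [zero_mul, mul_zero] at h2
  refine h2.congr' ?_
  filter_upwards [Ioo_mem_nhdsLT one_pos] with x hx
  have hfx := ne_one_of_mem_ball (hm (ofReal_mem_ball hx))
  have hx1 : (x : ℂ) ≠ 1 := ne_one_of_mem_ball (ofReal_mem_ball hx)
  have hfx' := sub_ne_zero.2 hfx.symm
  have hx1' := sub_ne_zero.2 hx1.symm
  have hx1'' := sub_ne_zero.2 hx1
  rw [cayley_sub_cayley hfx hx1]
  field_simp
  ring

end Radial

theorem eqOn_id_of_tendsto_radial {f : ℂ → ℂ} (hd : DifferentiableOn ℂ f (ball 0 1))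
    (hb : ∀ z ∈ ball (0 : ℂ) 1, ‖f z‖ ≤ 1)
    (h : Tendsto (fun x : ℝ => (f x - x) / (x - 1) ^ 3) (𝓝[<] 1) (𝓝 0)) :
    EqOn f (fun z => z) (ball 0 1) := by
  have hg := tendsto_sub_div_one_sub_of_tendsto_sub_div_pow h
  have hm := mapsTo_ball_of_tendsto_radial hd hb hg
  set p : ℂ → ℂ := fun z => cayley (f z) - cayley z
  have hre : ∀ z ∈ ball (0 : ℂ) 1, 0 ≤ (p z).re := fun z hz => by
    simpa [p] using re_cayley_le_re_cayley_of_tendsto_radial hd hb hg hz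
  have hp : DifferentiableOn ℂ p (ball 0 1) := fun z hz =>
    (((differentiableAt_cayley (ne_one_of_mem_ball (hm hz))).comp z
      (hd.differentiableAt (isOpen_ball.mem_nhds hz))).sub
        (differentiableAt_cayley (ne_one_of_mem_ball hz))).differentiableWithinAt
  have hp0 : p 0 = 0 := by
    refine norm_eq_zero.1 (le_antisymm (ge_of_tendsto
      (by simpa using (tendsto_cayley_sub_cayley_div_radial hm h).norm.const_mul 2) ?_)
      (norm_nonneg _))
    filter_upwards [Ioo_mem_nhdsLT one_pos] with x hx
    have := norm_mul_one_sub_norm_le_of_re_nonneg hp hre (ofReal_mem_ball hx)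
    rw [norm_one_sub_ofReal hx.2.le, mul_div_assoc', le_div_iff₀ (sub_pos.2 hx.2)]
    simpa [Real.norm_of_nonneg hx.1.le] using this
  intro z hz
  have hz0 := eqOn_zero_of_re_nonneg (convex_ball 0 1).isPreconnected isOpen_ball hp hre
    (mem_ball_self one_pos) hp0 hz
  have hfz := ne_one_of_mem_ball (hm hz)
  have hz1 := ne_one_of_mem_ball hz
  simp only [p, Pi.zero_apply, cayley_sub_cayley hfz hz1] at hz0
  simpa [sub_eq_zero, sub_ne_zero.2 hfz.symm, sub_ne_zero.2 hz1.symm] using hz0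

/-- There is exactly one `f ∈ 𝒮` with `f(z) = 1 + (z−1) + o(|z−1|³)` as `z →∠ 1`, namely the
identity; in particular any `f ∈ 𝒮` with `f(z) = z + o(|z−1|³)` equals `z` on the disk. -/
theorem bp_identity_rigidity :
    ((fun z : ℂ => z) ∈ SchurClass ∧
      NTLittleO (fun z : ℂ => z - (1 + (z - 1))) (fun z => (z - 1) ^ 3) 1) ∧
    (∀ f ∈ SchurClass,
      NTLittleO (fun z => f z - (1 + (z - 1))) (fun z => (z - 1) ^ 3) 1 →
        Set.EqOn f (fun z => z) unitDisk) := by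
  refine ⟨⟨⟨differentiableOn_id, fun z hz => (mem_ball_zero_iff.1 hz).le⟩, fun κ _ => ?_⟩,
    fun f hf hlo => eqOn_id_of_tendsto_radial hf.1 hf.2 ?_⟩
  · simpa only [add_sub_cancel, sub_self] using isLittleO_zero _ _
  · simpa using ((hlo 2 one_lt_two).comp_tendsto
      (tendsto_ofReal_nhdsLT_stolzAngle one_lt_two)).tendsto_div_nhds_zero

end
end

section
/- Let n ≥ 2, t_0 ∈ 𝕋 and s_0, …, s_{2n−1} ∈ ℂ be such that |s_0| = 1 and the structured matrix ℙ^s_n is Hermitian, i.e., ℙ^s_n = (ℙ^s_n)^*. Then p^s_{ij} = conj(p^s_{ji}) for all integers i, j ≥ 1 with i + j ≤ 2n − 2. -/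
/-!
The entries of `ℙ^s` satisfy the Stein-type identity
`t₀ p_{a+1,b} + t̄₀ p_{a,b+1} + p_{ab} = s_a s̄_b` for `b ≥ 1`: the inner sums of `p_{ab}` are,
up to the factor `(-1)^r t₀^{r+1}`, the binomial transforms `(1 + t₀ S)^r s` evaluated at `a`, and
Pascal's rule makes the three terms cancel once `t̄₀ t₀ = 1`. Subtracting the conjugate of the
identity with `a` and `b` swapped, the defect `q_{ab} = p_{ab} - conj p_{ba}` satisfies the
homogeneous recurrence `t₀ q_{a+1,b} + t̄₀ q_{a,b+1} + q_{ab} = 0`, which determines row `a + 1`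
from row `a`. Since `q` vanishes on the `n × n` block, it vanishes on all of `a + b ≤ 2n`.
-/

open Complex Filter Matrix Metric Set Asymptotics
open scoped ComplexConjugate ComplexOrder Topology

open Finset

lemma Finset.sum_Icc_one_eq_sum_range {M : Type*} [AddCommMonoid M] (f : ℕ → M) (m : ℕ) :
    ∑ k ∈ Icc 1 m, f k = ∑ k ∈ range m, f (k + 1) := by
  rw [range_eq_Ico, sum_Ico_add', zero_add, Ico_add_one_right_eq_Icc]

/-- The `a`-th term of `(1 + t • S)^r s`, where `S` is the left shift of sequences. -/
def binomialShift {R : Type*} [Semiring R] (t : R) (s : ℕ → R) (a r : ℕ) : R :=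
  ∑ l ∈ range (r + 1), (r.choose l : R) * t ^ l * s (a + l)

lemma binomialShift_zero {R : Type*} [Semiring R] (t : R) (s : ℕ → R) (a : ℕ) :
    binomialShift t s a 0 = s a := by
  simp [binomialShift]

lemma binomialShift_succ {R : Type*} [CommSemiring R] (t : R) (s : ℕ → R) (a r : ℕ) :
    binomialShift t s a (r + 1) = binomialShift t s a r + t * binomialShift t s (a + 1) r := by
  have hlow : binomialShift t s a r
      = s a + ∑ l ∈ range (r + 1), (r.choose (l + 1) : R) * t ^ (l + 1) * s (a + (l + 1)) := by
    rw [binomialShift, sum_range_succ', sum_range_succ, Nat.choose_succ_self]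
    simp [add_comm]
  have hhigh : t * binomialShift t s (a + 1) r
      = ∑ l ∈ range (r + 1), (r.choose l : R) * t ^ (l + 1) * s (a + (l + 1)) := by
    rw [binomialShift, mul_sum]
    exact sum_congr rfl fun l _ => by rw [add_assoc a 1 l, add_comm 1 l]; ring
  rw [binomialShift, sum_range_succ', hlow, hhigh]
  simp only [Nat.choose_succ_succ, Nat.cast_add, add_mul, sum_add_distrib, Nat.choose_zero_right,
    Nat.cast_one, pow_zero, mul_one, one_mul, add_zero]
  abel

section

variable (t0 : ℂ) (s : ℕ → ℂ)

lemma PsiEntry_succ_succ (l r : ℕ) :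
    PsiEntry t0 (l + 1) (r + 1) = (-1) ^ r * (r.choose l : ℂ) * t0 ^ (r + l + 1) := by
  unfold PsiEntry
  split_ifs with h
  · simp only [Nat.add_sub_cancel, show r + 1 + (l + 1) - 1 = r + l + 1 by omega]
  · simp [Nat.choose_eq_zero_of_lt (by omega : r < l)]

lemma sum_mul_PsiEntry (a r : ℕ) :
    ∑ l ∈ Icc 1 (r + 1), s (a + l - 1) * PsiEntry t0 l (r + 1)
      = (-1) ^ r * t0 ^ (r + 1) * binomialShift t0 s a r := by
  simp only [sum_Icc_one_eq_sum_range, PsiEntry_succ_succ, binomialShift, mul_sum,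
    Nat.add_succ_sub_one]
  refine sum_congr rfl fun l _ => ?_
  ring

lemma pEntry_succ_eq_sum_range (a b : ℕ) :
    pEntry t0 s a (b + 1)
      = ∑ r ∈ range (b + 1),
          (-1) ^ r * t0 ^ (r + 1) * binomialShift t0 s a r * conj (s (b - r)) := by
  rw [pEntry, sum_Icc_one_eq_sum_range]
  simp only [sum_mul_PsiEntry, Nat.add_sub_add_right]

lemma pEntry_stein (ht : conj t0 * t0 = 1) (a : ℕ) {b : ℕ} (hb : 1 ≤ b) :
    t0 * pEntry t0 s (a + 1) b + conj t0 * pEntry t0 s a (b + 1) + pEntry t0 s a b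
      = s a * conj (s b) := by
  obtain ⟨b, rfl⟩ : ∃ c, b = c + 1 := ⟨b - 1, by omega⟩
  have hsplit : pEntry t0 s a (b + 1 + 1)
      = ∑ r ∈ range (b + 1), (-1) ^ (r + 1) * t0 ^ (r + 1 + 1) * binomialShift t0 s a (r + 1)
          * conj (s (b - r)) + t0 * s a * conj (s (b + 1)) := by
    rw [pEntry_succ_eq_sum_range, sum_range_succ']
    simp [binomialShift_zero, Nat.add_sub_add_right]
  have hterm : ∀ r ∈ range (b + 1),
      t0 * ((-1) ^ r * t0 ^ (r + 1) * binomialShift t0 s (a + 1) r * conj (s (b - r)))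
        + conj t0 * ((-1) ^ (r + 1) * t0 ^ (r + 1 + 1) * binomialShift t0 s a (r + 1)
          * conj (s (b - r)))
        + (-1) ^ r * t0 ^ (r + 1) * binomialShift t0 s a r * conj (s (b - r)) = 0 := by
    intro r _
    rw [binomialShift_succ]
    linear_combination (-1) ^ (r + 1) * t0 ^ (r + 1) * (binomialShift t0 s a r
      + t0 * binomialShift t0 s (a + 1) r) * conj (s (b - r)) * ht
  have hsum := sum_eq_zero hterm
  rw [sum_add_distrib, sum_add_distrib, ← mul_sum, ← mul_sum] at hsum
  rw [hsplit, pEntry_succ_eq_sum_range, pEntry_succ_eq_sum_range]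
  linear_combination hsum + s a * conj (s (b + 1)) * ht

def pDefect (a b : ℕ) : ℂ :=
  pEntry t0 s a b - conj (pEntry t0 s b a)

lemma pDefect_swap (a b : ℕ) : pDefect t0 s b a = -conj (pDefect t0 s a b) := by
  simp [pDefect]

lemma pDefect_stein (ht : conj t0 * t0 = 1) {a b : ℕ} (ha : 1 ≤ a) (hb : 1 ≤ b) :
    t0 * pDefect t0 s (a + 1) b + conj t0 * pDefect t0 s a (b + 1) + pDefect t0 s a b = 0 := by
  have hab := pEntry_stein t0 s ht a hb
  have hba := congrArg conj (pEntry_stein t0 s ht b ha)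
  simp only [map_add, map_mul, conj_conj] at hba
  simp only [pDefect]
  linear_combination hab - hba

lemma pDefect_eq_zero_of_Pmat_hermitian {n : ℕ} (hherm : Pmat t0 s n = (Pmat t0 s n)ᴴ)
    {a b : ℕ} (ha : 1 ≤ a) (han : a ≤ n) (hb : 1 ≤ b) (hbn : b ≤ n) : pDefect t0 s a b = 0 := by
  have h := congrFun (congrFun hherm ⟨a - 1, by omega⟩) ⟨b - 1, by omega⟩
  simp only [Pmat, conjTranspose_apply, of_apply, Nat.sub_add_cancel ha,
    Nat.sub_add_cancel hb] at h
  rw [pDefect, h, star_def, sub_self]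

end

lemma eq_zero_of_row_eq_zero {R : Type*} [Ring R] [NoZeroDivisors R] {x : ℕ → ℕ → R}
    {t u : R} (ht : t ≠ 0) {a : ℕ}
    (hrec : ∀ i j, a ≤ i → 1 ≤ j → t * x (i + 1) j + u * x i (j + 1) + x i j = 0)
    (k : ℕ) : ∀ m, (∀ j, 1 ≤ j → j ≤ m + k → x a j = 0) →
      ∀ j, 1 ≤ j → j ≤ m → x (a + k) j = 0 := by
  induction k with
  | zero => exact fun m hrow => hrow
  | succ k ih =>
    intro m hrow j hj hjm
    have hnext : x (a + k) (j + 1) = 0 := ih (m + 1) (fun i hi him => hrow i hi (by omega)) _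
      (by omega) (by omega)
    have hcur : x (a + k) j = 0 := ih (m + 1) (fun i hi him => hrow i hi (by omega)) _ hj
      (by omega)
    have h := hrec (a + k) j (by omega) hj
    rw [hnext, hcur, mul_zero, add_zero, add_zero] at h
    exact (mul_eq_zero.mp h).resolve_left ht

theorem symmetry_of_structured_entries_general (n : ℕ) (t0 : ℂ)
    (ht : ‖t0‖ = 1) (s : ℕ → ℂ)
    (hherm : Pmat t0 s n = (Pmat t0 s n)ᴴ) :
    ∀ i j : ℕ, 1 ≤ i → 1 ≤ j → i + j ≤ 2 * n - 2 →
      pEntry t0 s i j = conj (pEntry t0 s j i) := by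
  have hunit : conj t0 * t0 = 1 := by
    rw [conj_mul', ht]
    norm_num
  have ht0 : t0 ≠ 0 := norm_ne_zero_iff.mp (by rw [ht]; exact one_ne_zero)
  have hlower : ∀ i j, 1 ≤ i → 1 ≤ j → j ≤ n → i + j ≤ 2 * n → pDefect t0 s i j = 0 := by
    intro i j hi hj hjn hij
    rcases le_or_gt i n with hin | hin
    · exact pDefect_eq_zero_of_Pmat_hermitian t0 s hherm hi hin hj hjn
    · obtain ⟨k, rfl⟩ : ∃ k, i = n + k := ⟨i - n, by omega⟩
      have hrec := fun i j (hi : n ≤ i) (hj : 1 ≤ j) =>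
        pDefect_stein t0 s hunit (a := i) (by omega) hj
      have hrow := fun j (hj : 1 ≤ j) (hjn : j ≤ n - k + k) =>
        pDefect_eq_zero_of_Pmat_hermitian t0 s hherm (by omega) le_rfl hj (by omega)
      exact eq_zero_of_row_eq_zero ht0 hrec k (n - k) hrow j hj (by omega)
  intro i j hi hj hij
  rw [← sub_eq_zero, ← pDefect]
  rcases le_or_gt j n with hjn | hjn
  · exact hlower i j hi hj hjn (by omega)
  · rw [pDefect_swap, hlower j i hj hi (by omega) (by omega), map_zero, neg_zero]

/-- **Symmetry lemma.** If `|s_0| = 1` and `ℙ^s_n` is Hermitian, then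
`p^s_{ij} = conj p^s_{ji}` for all `i, j ≥ 1` with `i + j ≤ 2n − 2`. -/
theorem symmetry_of_structured_entries (n : ℕ) (hn : 2 ≤ n) (t0 : ℂ)
    (ht : ‖t0‖ = 1) (s : ℕ → ℂ) (h0 : ‖s 0‖ = 1)
    (hherm : Pmat t0 s n = (Pmat t0 s n)ᴴ) :
    ∀ i j : ℕ, 1 ≤ i → 1 ≤ j → i + j ≤ 2 * n - 2 →
      pEntry t0 s i j = conj (pEntry t0 s j i) :=
  symmetry_of_structured_entries_general n t0 ht s hherm
end
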